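/- arXiv:2605.10795 — 4 statements merged into one kernel-verified Lean document; each statement's English description precedes it below -/
import Mathlib

section
/- Let α > 0 and for each integer p ≥ 2 let σ_p² = α / log p. Let s_{μρ}, for μ, ρ ∈ {1, …, p}, be independent Gaussian random variables with mean E[s_{μρ}] = 1 if μ = ρ and 0 otherwise, and common variance Var[s_{μρ}] = α / log p. Then, as p → ∞, the probability P[ for all μ ∈ {1,…,p}, s_{μμ} ≥ max_{ρ ≠ μ} s_{μρ} ] converges to 1 if α < 1/8, and converges to 0 if α > 1/8. -/
open MeasureTheory ProbabilityTheory Filter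

/-- The independent-Gaussian model of the Hebbian scores: the `p × p` scores are
independent Gaussians, the diagonal ones with mean `1`, the off-diagonal ones with
mean `0`, and all with variance `α / log p`. -/
noncomputable def hebbScoreModel (α : ℝ) (p : ℕ) : Measure (Fin p × Fin p → ℝ) :=
  Measure.pi fun i => gaussianReal (if i.1 = i.2 then 1 else 0) (α / Real.log p).toNNReal

/-- The event that every diagonal score dominates all the off-diagonal scores in its row. -/
def hebbSuccess (p : ℕ) : Set (Fin p × Fin p → ℝ) :=
  {s | ∀ μ : Fin p, ∀ ρ : Fin p, ρ ≠ μ → s (μ, ρ) ≤ s (μ, μ)}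

open Real Set
open scoped NNReal ENNReal

section Lemmas


lemma gauss_tail_ub (v : ℝ≥0) (hv : v ≠ 0) (x : ℝ) (hx : 0 ≤ x) :
    gaussianReal 0 v (Ici x) ≤ ENNReal.ofReal (rexp (-x^2 / (2*v))) := by
  have hv' : (0:ℝ) < v := by positivity
  rw [gaussianReal_apply_eq_integral 0 hv]
  apply ENNReal.ofReal_le_ofReal
  have key : ∀ s ∈ Ici x, gaussianPDFReal 0 v s ≤ rexp (-x^2/(2*v)) * gaussianPDFReal x v s := by
    intro s hs
    simp only [gaussianPDFReal, sub_zero]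
    have hsx : x ≤ s := hs
    have hC : (0:ℝ) ≤ (Real.sqrt (2*π*(v:ℝ)))⁻¹ := by positivity
    have hexp : rexp (-s^2/(2*(v:ℝ))) ≤ rexp (-x^2/(2*(v:ℝ))) * rexp (-(s-x)^2/(2*(v:ℝ))) := by
      rw [← Real.exp_add]
      apply Real.exp_le_exp.mpr
      rw [← add_div, div_le_div_iff_of_pos_right (by positivity)]
      nlinarith
    calc (Real.sqrt (2*π*(v:ℝ)))⁻¹ * rexp (-s^2/(2*(v:ℝ)))
        ≤ (Real.sqrt (2*π*(v:ℝ)))⁻¹ * (rexp (-x^2/(2*(v:ℝ))) * rexp (-(s-x)^2/(2*(v:ℝ)))) :=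
          mul_le_mul_of_nonneg_left hexp hC
      _ = rexp (-x^2/(2*(v:ℝ))) * ((Real.sqrt (2*π*(v:ℝ)))⁻¹ * rexp (-(s-x)^2/(2*(v:ℝ)))) := by
          ring
  calc ∫ s in Ici x, gaussianPDFReal 0 v s
      ≤ ∫ s in Ici x, rexp (-x^2/(2*v)) * gaussianPDFReal x v s :=
        setIntegral_mono_on ((integrable_gaussianPDFReal 0 v).restrict)
          (((integrable_gaussianPDFReal x v).const_mul _).restrict) measurableSet_Ici key
    _ = rexp (-x^2/(2*v)) * ∫ s in Ici x, gaussianPDFReal x v s := integral_const_mul _ _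
    _ ≤ rexp (-x^2/(2*v)) * ∫ s, gaussianPDFReal x v s := by
        apply mul_le_mul_of_nonneg_left _ (by positivity)
        exact setIntegral_le_integral (integrable_gaussianPDFReal x v)
          (ae_of_all _ (gaussianPDFReal_nonneg x v))
    _ = rexp (-x^2/(2*v)) := by rw [integral_gaussianPDFReal_eq_one x hv, mul_one]

lemma gauss_tail_lb (v : ℝ≥0) (hv : v ≠ 0) (x : ℝ) (hx : 0 ≤ x) :
    ENNReal.ofReal ((Real.sqrt (2*π))⁻¹ * rexp (-(x + Real.sqrt v)^2 / (2*v)))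
      ≤ gaussianReal 0 v (Ioi x) := by
  have hv' : (0:ℝ) < v := by positivity
  have hsv : (0:ℝ) < Real.sqrt v := Real.sqrt_pos.mpr hv'
  have h1 : gaussianReal 0 v (Ioc x (x + Real.sqrt v)) ≤ gaussianReal 0 v (Ioi x) :=
    measure_mono Ioc_subset_Ioi_self
  refine le_trans ?_ h1
  rw [gaussianReal_apply_eq_integral 0 hv]
  apply ENNReal.ofReal_le_ofReal
  have key : ∀ s ∈ Ioc x (x + Real.sqrt v),
      (Real.sqrt (2*π*v))⁻¹ * rexp (-(x + Real.sqrt v)^2 / (2*v)) ≤ gaussianPDFReal 0 v s := by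
    intro s hs
    simp only [gaussianPDFReal, sub_zero]
    apply mul_le_mul_of_nonneg_left _ (by positivity)
    apply Real.exp_le_exp.mpr
    rw [div_le_div_iff_of_pos_right (by positivity)]
    have h2 : x < s := hs.1
    have h3 : s ≤ x + Real.sqrt v := hs.2
    nlinarith
  calc (Real.sqrt (2*π))⁻¹ * rexp (-(x + Real.sqrt v)^2 / (2*v))
      = ((Real.sqrt (2*π*v))⁻¹ * rexp (-(x + Real.sqrt v)^2 / (2*v))) * Real.sqrt v := by
        rw [Real.sqrt_mul (by positivity) (v:ℝ)]
        field_simp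
    _ = ∫ s in Ioc x (x + Real.sqrt v),
          (Real.sqrt (2*π*v))⁻¹ * rexp (-(x + Real.sqrt v)^2 / (2*v)) := by
        rw [setIntegral_const]
        simp [Real.volume_Ioc, ENNReal.toReal_ofReal hsv.le, mul_comm]
    _ ≤ ∫ s in Ioc x (x + Real.sqrt v), gaussianPDFReal 0 v s := by
        apply setIntegral_mono_on (integrableOn_const (by simp [Real.volume_Ioc]))
          ((integrable_gaussianPDFReal 0 v).restrict) measurableSet_Ioc key


variable {v : ℝ≥0}

lemma gauss_shift_Iio (m c : ℝ) : gaussianReal m v (Iio c) = gaussianReal 0 v (Iio (c - m)) := by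
  have h := gaussianReal_map_add_const (μ := 0) (v := v) m
  rw [zero_add] at h
  rw [← h, Measure.map_apply (measurable_id'.add_const m) measurableSet_Iio]
  congr 1
  ext x
  simp [sub_eq_iff_eq_add, lt_sub_iff_add_lt]

lemma gauss_shift_Iic (m c : ℝ) : gaussianReal m v (Iic c) = gaussianReal 0 v (Iic (c - m)) := by
  have h := gaussianReal_map_add_const (μ := 0) (v := v) m
  rw [zero_add] at h
  rw [← h, Measure.map_apply (measurable_id'.add_const m) measurableSet_Iic]
  congr 1
  ext x
  simp [le_sub_iff_add_le]

lemma gauss_neg_map : (gaussianReal 0 v).map ((-1 : ℝ) * ·) = gaussianReal 0 v := by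
  rw [gaussianReal_map_const_mul (-1 : ℝ)]
  norm_num

lemma gauss_neg_Iio (c : ℝ) : gaussianReal 0 v (Iio (-c)) = gaussianReal 0 v (Ioi c) := by
  conv_lhs => rw [← gauss_neg_map]
  rw [Measure.map_apply (measurable_id'.const_mul _) measurableSet_Iio]
  congr 1
  ext x
  simp only [mem_preimage, mem_Iio, mem_Ioi]
  constructor <;> intro h <;> nlinarith

lemma gauss_neg_Iic (c : ℝ) : gaussianReal 0 v (Iic (-c)) = gaussianReal 0 v (Ici c) := by
  conv_lhs => rw [← gauss_neg_map]
  rw [Measure.map_apply (measurable_id'.const_mul _) measurableSet_Iic]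
  congr 1
  ext x
  simp only [mem_preimage, mem_Iic, mem_Ici]
  constructor <;> intro h <;> nlinarith

lemma pi_map_pair {ι : Type*} [Fintype ι] (μ : ι → Measure ℝ) [∀ i, IsProbabilityMeasure (μ i)]
    {i j : ι} (hij : i ≠ j) :
    (Measure.pi μ).map (fun s => (s i, s j)) = (μ i).prod (μ j) := by
  classical
  refine (Measure.prod_eq fun A B hA hB => ?_).symm
  rw [Measure.map_apply ((measurable_pi_apply i).prodMk (measurable_pi_apply j)) (hA.prod hB)]
  have hpre : (fun s : ι → ℝ => (s i, s j)) ⁻¹' (A ×ˢ B)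
      = univ.pi (fun k => if k = i then A else if k = j then B else univ) := by
    ext s
    simp only [mem_preimage, mem_prod, Set.mem_pi, mem_univ, true_implies]
    constructor
    · rintro ⟨h1, h2⟩ k
      by_cases hk : k = i
      · subst hk; simp [h1]
      · by_cases hk' : k = j
        · subst hk'; simp [hk, h2]
        · simp [hk, hk']
    · intro h
      constructor
      · have := h i; simpa using this
      · have := h j; rw [if_neg hij.symm, if_pos rfl] at this; exact this
  rw [hpre, Measure.pi_pi]
  rw [← Finset.prod_mul_prod_compl ({i, j} : Finset ι)]
  rw [Finset.prod_pair hij]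
  simp only [if_pos rfl, if_neg hij.symm]
  have : ∀ k ∈ ({i, j} : Finset ι)ᶜ, μ k (if k = i then A else if k = j then B else univ) = 1 := by
    intro k hk
    simp only [Finset.mem_compl, Finset.mem_insert, Finset.mem_singleton, not_or] at hk
    rw [if_neg hk.1, if_neg hk.2]
    exact measure_univ
  rw [Finset.prod_congr rfl this]
  simp


variable {v : ℝ≥0}

-- from stage 1/2 (assume proven)
lemma key_pw (hv : v ≠ 0) (x : ℝ) :
    gaussianPDFReal 1 v x * rexp (-x^2/(2*v)) ≤ rexp (-1/(4*v)) * gaussianPDFReal 2⁻¹ (v/2) x := by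
  have hv' : (0:ℝ) < v := by positivity
  simp only [gaussianPDFReal]
  have hco : ((v/2 : ℝ≥0) : ℝ) = (v:ℝ)/2 := by rw [NNReal.coe_div, NNReal.coe_two]
  rw [hco]
  have hE : rexp (-(x-1)^2/(2*(v:ℝ))) * rexp (-x^2/(2*(v:ℝ)))
      = rexp (-1/(4*(v:ℝ))) * rexp (-(x - 2⁻¹)^2/(2*((v:ℝ)/2))) := by
    rw [← Real.exp_add, ← Real.exp_add]
    congr 1
    field_simp
    ring
  have hsqrt : (Real.sqrt (2*π*(v:ℝ)))⁻¹ ≤ (Real.sqrt (2*π*((v:ℝ)/2)))⁻¹ := by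
    apply inv_anti₀
    · apply Real.sqrt_pos.mpr; positivity
    · apply Real.sqrt_le_sqrt; nlinarith [pi_pos]
  calc (Real.sqrt (2*π*(v:ℝ)))⁻¹ * rexp (-(x-1)^2/(2*(v:ℝ))) * rexp (-x^2/(2*(v:ℝ)))
      = (Real.sqrt (2*π*(v:ℝ)))⁻¹ * (rexp (-1/(4*(v:ℝ))) * rexp (-(x - 2⁻¹)^2/(2*((v:ℝ)/2)))) := by
        rw [mul_assoc, hE]
    _ ≤ (Real.sqrt (2*π*((v:ℝ)/2)))⁻¹ * (rexp (-1/(4*(v:ℝ))) * rexp (-(x - 2⁻¹)^2/(2*((v:ℝ)/2)))) := by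
        apply mul_le_mul_of_nonneg_right hsqrt (by positivity)
    _ = rexp (-1/(4*(v:ℝ))) * ((Real.sqrt (2*π*((v:ℝ)/2)))⁻¹ * rexp (-(x - 2⁻¹)^2/(2*((v:ℝ)/2)))) := by
        ring

lemma pair_prob_le (hv : v ≠ 0) :
    ((gaussianReal 1 v).prod (gaussianReal 0 v)) {q : ℝ × ℝ | q.1 < q.2}
      ≤ ENNReal.ofReal (2 * rexp (-1/(4*v))) := by
  have hv' : (0:ℝ) < v := by positivity
  have hv2 : (v/2 : ℝ≥0) ≠ 0 := by
    simp only [ne_eq, div_eq_zero_iff, OfNat.ofNat_ne_zero, or_false]; exact hv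
  have hset : MeasurableSet {q : ℝ × ℝ | q.1 < q.2} := measurableSet_lt measurable_fst measurable_snd
  rw [Measure.prod_apply hset]
  have hslice : ∀ x : ℝ, (Prod.mk x ⁻¹' {q : ℝ × ℝ | q.1 < q.2}) = Ioi x := fun x => rfl
  simp_rw [hslice]
  have hpt : ∀ x : ℝ, gaussianReal 0 v (Ioi x)
      ≤ (Iic (0:ℝ)).indicator (1 : ℝ → ℝ≥0∞) x + ENNReal.ofReal (rexp (-x^2/(2*v))) := by
    intro x
    by_cases hx : x ≤ 0
    · rw [Set.indicator_of_mem (show x ∈ Iic (0:ℝ) from hx)]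
      exact le_add_right prob_le_one
    · rw [Set.indicator_of_notMem (show x ∉ Iic (0:ℝ) from hx), zero_add]
      push_neg at hx
      exact le_trans (measure_mono Ioi_subset_Ici_self) (gauss_tail_ub v hv x hx.le)
  calc ∫⁻ x, gaussianReal 0 v (Ioi x) ∂(gaussianReal 1 v)
      ≤ ∫⁻ x, ((Iic (0:ℝ)).indicator (1 : ℝ → ℝ≥0∞) x + ENNReal.ofReal (rexp (-x^2/(2*v)))) ∂(gaussianReal 1 v) :=
        lintegral_mono hpt
    _ = gaussianReal 1 v (Iic 0) + ∫⁻ x, ENNReal.ofReal (rexp (-x^2/(2*v))) ∂(gaussianReal 1 v) := by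
        rw [lintegral_add_left ((measurable_one).indicator measurableSet_Iic)]
        congr 1
        exact lintegral_indicator_one measurableSet_Iic
    _ ≤ ENNReal.ofReal (rexp (-1/(4*v))) + ENNReal.ofReal (rexp (-1/(4*v))) := by
        gcongr
        · rw [gauss_shift_Iic]
          have h01 : (0:ℝ) - 1 = -1 := by norm_num
          rw [h01, gauss_neg_Iic (v := v) (c := 1)]
          refine le_trans (gauss_tail_ub v hv 1 zero_le_one) (ENNReal.ofReal_le_ofReal ?_)
          apply Real.exp_le_exp.mpr
          rw [one_pow]
          rw [div_le_div_iff₀ (by positivity) (by positivity)]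
          nlinarith
        · rw [gaussianReal_of_var_ne_zero _ hv,
            lintegral_withDensity_eq_lintegral_mul _ (measurable_gaussianPDF _ _)
              (by exact (Real.measurable_exp.comp (by fun_prop)).ennreal_ofReal)]
          have hb : ∀ x : ℝ, gaussianPDF 1 v x * ENNReal.ofReal (rexp (-x^2/(2*v)))
              ≤ ENNReal.ofReal (rexp (-1/(4*v))) * gaussianPDF 2⁻¹ (v/2) x := by
            intro x
            rw [gaussianPDF, gaussianPDF, ← ENNReal.ofReal_mul (gaussianPDFReal_nonneg _ _ _),
              ← ENNReal.ofReal_mul (Real.exp_nonneg _)]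
            exact ENNReal.ofReal_le_ofReal (key_pw hv x)
          calc ∫⁻ x, gaussianPDF 1 v x * ENNReal.ofReal (rexp (-x^2/(2*v)))
              ≤ ∫⁻ x, ENNReal.ofReal (rexp (-1/(4*v))) * gaussianPDF 2⁻¹ (v/2) x := lintegral_mono hb
            _ = ENNReal.ofReal (rexp (-1/(4*v))) * ∫⁻ x, gaussianPDF 2⁻¹ (v/2) x :=
                lintegral_const_mul _ (measurable_gaussianPDF _ _)
            _ = ENNReal.ofReal (rexp (-1/(4*v))) := by
                rw [lintegral_gaussianPDF_eq_one _ hv2, mul_one]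
    _ = ENNReal.ofReal (2 * rexp (-1/(4*v))) := by
        rw [← ENNReal.ofReal_add (Real.exp_nonneg _) (Real.exp_nonneg _), two_mul]


noncomputable def hebbM (p : ℕ) (v : ℝ≥0) : Measure (Fin p × Fin p → ℝ) :=
  Measure.pi fun i => gaussianReal (if i.1 = i.2 then 1 else 0) v

lemma hebbScoreModel_eq (α : ℝ) (p : ℕ) :
    hebbScoreModel α p = hebbM p (α / Real.log p).toNNReal := rfl

instance (p : ℕ) (v : ℝ≥0) : IsProbabilityMeasure (hebbM p v) := by
  unfold hebbM; infer_instance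

lemma hebbSuccess_measurable (p : ℕ) : MeasurableSet (hebbSuccess p) := by
  have : hebbSuccess p = ⋂ (μ : Fin p) (ρ : Fin p) (_ : ρ ≠ μ),
      {s : Fin p × Fin p → ℝ | s (μ, ρ) ≤ s (μ, μ)} := by
    ext s; simp [hebbSuccess]
  rw [this]
  exact MeasurableSet.iInter fun μ => MeasurableSet.iInter fun ρ => MeasurableSet.iInter fun _ =>
    measurableSet_le (measurable_pi_apply _) (measurable_pi_apply _)

lemma hebb_fail_le (p : ℕ) {v : ℝ≥0} (hv : v ≠ 0) :
    hebbM p v (hebbSuccess p)ᶜ ≤ (p : ℝ≥0∞)^2 * ENNReal.ofReal (2 * rexp (-1/(4*v))) := by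
  classical
  set B : Fin p × Fin p → Set (Fin p × Fin p → ℝ) :=
    fun i => {s | s (i.1, i.1) < s i} with hB
  have hsub : (hebbSuccess p)ᶜ ⊆ ⋃ i, B i := by
    intro s hs
    simp only [hebbSuccess, mem_compl_iff, mem_setOf_eq, not_forall] at hs
    obtain ⟨μ, ρ, hne, hlt⟩ := hs
    exact mem_iUnion.mpr ⟨(μ, ρ), by simpa [B] using lt_of_not_ge hlt⟩
  have hone : ∀ i : Fin p × Fin p, hebbM p v (B i) ≤ ENNReal.ofReal (2 * rexp (-1/(4*v))) := by
    intro i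
    by_cases hdiag : i.2 = i.1
    · have hBe : B i = ∅ := by
        ext s; simp only [hB, mem_setOf_eq, mem_empty_iff_false, iff_false, not_lt]
        rw [show ((i.1, i.1) : Fin p × Fin p) = i from Prod.ext rfl hdiag.symm]
      simp [hBe]
    · have hne : ((i.1, i.1) : Fin p × Fin p) ≠ i := fun h => hdiag (congrArg Prod.snd h).symm
      have hmeasf : Measurable (fun s : Fin p × Fin p → ℝ => (s (i.1, i.1), s i)) := by fun_prop
      have hmeas : MeasurableSet {q : ℝ × ℝ | q.1 < q.2} :=
        measurableSet_lt measurable_fst measurable_snd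
      have hmap := pi_map_pair (fun j : Fin p × Fin p => gaussianReal (if j.1 = j.2 then 1 else 0) v) hne
      simp only at hmap
      have hBi : hebbM p v (B i)
          = Measure.map (fun s : Fin p × Fin p → ℝ => (s (i.1, i.1), s i)) (hebbM p v)
              {q : ℝ × ℝ | q.1 < q.2} := by
        rw [Measure.map_apply hmeasf hmeas]; rfl
      rw [hBi]
      rw [show hebbM p v = Measure.pi (fun j : Fin p × Fin p => gaussianReal (if j.1 = j.2 then 1 else 0) v) from rfl, hmap]
      rw [if_pos trivial, if_neg (fun h : i.1 = i.2 => hdiag h.symm)]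
      exact pair_prob_le hv
  calc hebbM p v (hebbSuccess p)ᶜ ≤ hebbM p v (⋃ i, B i) := measure_mono hsub
    _ ≤ ∑' i, hebbM p v (B i) := measure_iUnion_le B
    _ = ∑ i : Fin p × Fin p, hebbM p v (B i) := tsum_fintype _
    _ ≤ ∑ _i : Fin p × Fin p, ENNReal.ofReal (2 * rexp (-1/(4*v))) := Finset.sum_le_sum fun i _ => hone i
    _ = (p : ℝ≥0∞)^2 * ENNReal.ofReal (2 * rexp (-1/(4*v))) := by
        rw [Finset.sum_const, Finset.card_univ, Fintype.card_prod, Fintype.card_fin,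
          nsmul_eq_mul, Nat.cast_mul, pow_two]


lemma hebb_succ_le (p : ℕ) (v : ℝ≥0) :
    hebbM p v (hebbSuccess p)
      ≤ (gaussianReal 1 v (Ici (2⁻¹:ℝ))
          + gaussianReal 1 v (Iio (2⁻¹:ℝ)) * (gaussianReal 0 v (Iio (2⁻¹:ℝ)))^(p-1))^p := by
  classical
  set U := gaussianReal 1 v (Ici (2⁻¹:ℝ)) with hU
  set A := gaussianReal 1 v (Iio (2⁻¹:ℝ)) with hA
  set B := gaussianReal 0 v (Iio (2⁻¹:ℝ)) with hB0
  set W := A * B^(p-1) with hW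
  set C : Finset (Fin p) → (Fin p × Fin p) → Set ℝ :=
    fun T i => if i.1 ∈ T then (if i.2 = i.1 then Ici (2⁻¹:ℝ) else univ) else Iio (2⁻¹:ℝ) with hC
  have hsub : hebbSuccess p ⊆ ⋃ T : Finset (Fin p), univ.pi (C T) := by
    intro s hs
    refine mem_iUnion.mpr ⟨Finset.univ.filter (fun μ => (2⁻¹:ℝ) ≤ s (μ, μ)), ?_⟩
    intro i _
    by_cases h1 : i.1 ∈ Finset.univ.filter (fun μ => (2⁻¹:ℝ) ≤ s (μ, μ))
    · have hle : (2⁻¹:ℝ) ≤ s (i.1, i.1) := (Finset.mem_filter.mp h1).2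
      simp only [hC, if_pos h1]
      by_cases h2 : i.2 = i.1
      · rw [if_pos h2]
        have : (i.1, i.1) = i := Prod.ext rfl h2.symm
        rw [← this]
        exact hle
      · rw [if_neg h2]; trivial
    · have hlt : s (i.1, i.1) < 2⁻¹ := by
        by_contra h
        exact h1 (Finset.mem_filter.mpr ⟨Finset.mem_univ _, not_lt.mp h⟩)
      simp only [hC, if_neg h1]
      by_cases h2 : i.2 = i.1
      · have : (i.1, i.1) = i := Prod.ext rfl h2.symm
        rw [← this]
        exact hlt
      · have := hs i.1 i.2 h2
        have hi : (i.1, i.2) = i := Prod.ext rfl rfl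
        rw [hi] at this
        exact lt_of_le_of_lt this hlt
  have hpiT : ∀ T : Finset (Fin p),
      hebbM p v (univ.pi (C T)) = ∏ μ : Fin p, (if μ ∈ T then U else W) := by
    intro T
    rw [show hebbM p v = Measure.pi (fun i : Fin p × Fin p => gaussianReal (if i.1 = i.2 then 1 else 0) v) from rfl,
      Measure.pi_pi]
    rw [Fintype.prod_prod_type]
    refine Finset.prod_congr rfl fun μ _ => ?_
    by_cases hμ : μ ∈ T
    · rw [if_pos hμ]
      have : ∀ ρ : Fin p, gaussianReal (if μ = ρ then 1 else 0) v (C T (μ, ρ))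
          = (if ρ = μ then U else 1) := by
        intro ρ
        by_cases h2 : ρ = μ
        · subst h2; simp [hC, hμ, hU]
        · rw [if_neg h2]
          simp only [hC, if_pos hμ]
          rw [if_neg h2]
          exact measure_univ
      rw [Finset.prod_congr rfl (fun ρ _ => this ρ), Finset.prod_ite_eq' Finset.univ μ (fun _ => U),
        if_pos (Finset.mem_univ μ)]
    · rw [if_neg hμ]
      have : ∀ ρ : Fin p, gaussianReal (if μ = ρ then 1 else 0) v (C T (μ, ρ))
          = (if ρ = μ then A else B) := by
        intro ρ
        simp only [hC, if_neg hμ]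
        by_cases h2 : ρ = μ
        · subst h2; rw [if_pos rfl, if_pos rfl]
        · rw [if_neg h2, if_neg (fun h : μ = ρ => h2 h.symm)]
      rw [Finset.prod_congr rfl (fun ρ _ => this ρ),
        ← Finset.mul_prod_erase Finset.univ _ (Finset.mem_univ μ), if_pos rfl]
      have herase : ∀ ρ ∈ Finset.univ.erase μ, (if ρ = μ then A else B) = B := by
        intro ρ hρ
        rw [if_neg (Finset.mem_erase.mp hρ).1]
      rw [Finset.prod_congr rfl herase, Finset.prod_const,
        Finset.card_erase_of_mem (Finset.mem_univ μ), Finset.card_univ, Fintype.card_fin]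
  calc hebbM p v (hebbSuccess p) ≤ hebbM p v (⋃ T : Finset (Fin p), univ.pi (C T)) :=
        measure_mono hsub
    _ ≤ ∑' T : Finset (Fin p), hebbM p v (univ.pi (C T)) := measure_iUnion_le _
    _ = ∑ T : Finset (Fin p), ∏ μ : Fin p, (if μ ∈ T then U else W) := by
        rw [tsum_fintype]
        exact Finset.sum_congr rfl fun T _ => hpiT T
    _ = (U + W)^p := by
        have : ∀ T : Finset (Fin p), ∏ μ : Fin p, (if μ ∈ T then U else W)
            = (∏ _μ ∈ T, U) * ∏ _μ ∈ Tᶜ, W := by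
          intro T
          rw [← Finset.prod_mul_prod_compl T]
          congr 1
          · exact Finset.prod_congr rfl fun μ hμ => if_pos hμ
          · exact Finset.prod_congr rfl fun μ hμ => if_neg (Finset.mem_compl.mp hμ)
        rw [Finset.sum_congr rfl fun T _ => this T]
        have hadd := Finset.prod_add (fun _ : Fin p => U) (fun _ : Fin p => W) Finset.univ
        rw [Finset.prod_const, Finset.card_univ, Fintype.card_fin] at hadd
        rw [hadd, Finset.powerset_univ]
        exact Finset.sum_congr rfl fun T _ => by rw [Finset.compl_eq_univ_sdiff]


end Lemmas

section Helpers

lemma tendsto_lin_sub_sqrt (δ c : ℝ) (hδ : 0 < δ) :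
    Tendsto (fun x : ℝ => δ * x - c * Real.sqrt x) atTop atTop := by
  apply tendsto_atTop_mono' atTop (f₁ := fun x : ℝ => (δ/2) * x)
  · filter_upwards [eventually_ge_atTop (max 0 ((2*|c|/δ)^2))] with x hx
    have hx0 : (0:ℝ) ≤ x := le_trans (le_max_left _ _) hx
    have hxc : (2*|c|/δ)^2 ≤ x := le_trans (le_max_right _ _) hx
    have hs : 2*|c|/δ ≤ Real.sqrt x := by
      rw [show (2*|c|/δ) = Real.sqrt ((2*|c|/δ)^2) from (Real.sqrt_sq (by positivity)).symm]
      exact Real.sqrt_le_sqrt hxc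
    have h2 : c * Real.sqrt x ≤ (δ/2) * x := by
      calc c * Real.sqrt x ≤ |c| * Real.sqrt x :=
            mul_le_mul_of_nonneg_right (le_abs_self c) (Real.sqrt_nonneg x)
        _ = (δ/2) * ((2*|c|/δ) * Real.sqrt x) := by field_simp
        _ ≤ (δ/2) * (Real.sqrt x * Real.sqrt x) := by
            apply mul_le_mul_of_nonneg_left
              (mul_le_mul_of_nonneg_right hs (Real.sqrt_nonneg x)) (by positivity)
        _ = (δ/2) * x := by rw [Real.mul_self_sqrt hx0]
    simp only [ge_iff_le]
    linarith
  · exact Tendsto.const_mul_atTop (by positivity) tendsto_id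

lemma tendsto_log_nat : Tendsto (fun p : ℕ => Real.log p) atTop atTop :=
  Real.tendsto_log_atTop.comp tendsto_natCast_atTop_atTop

instance (α : ℝ) (p : ℕ) : IsProbabilityMeasure (hebbScoreModel α p) := by
  rw [hebbScoreModel_eq]; infer_instance

end Helpers

theorem stmt0 (α : ℝ) (hα : 0 < α) :
    (α < 1 / 8 →
      Tendsto (fun p : ℕ => ((hebbScoreModel α p) (hebbSuccess p)).toReal)
        atTop (nhds 1)) ∧
    (1 / 8 < α →
      Tendsto (fun p : ℕ => ((hebbScoreModel α p) (hebbSuccess p)).toReal)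
        atTop (nhds 0)) := by
  constructor
  · -- α < 1/8 : success probability → 1
    intro hα8
    have hc : 2 - 1/(4*α) < 0 := by
      rw [sub_neg, lt_div_iff₀ (by positivity)]
      linarith
    have hf0 : Tendsto (fun p : ℕ => 2 * rexp ((2 - 1/(4*α)) * Real.log p)) atTop (nhds 0) := by
      have h1 : Tendsto (fun p : ℕ => (2 - 1/(4*α)) * Real.log p) atTop atBot :=
        Tendsto.const_mul_atTop_of_neg hc tendsto_log_nat
      have h2 := Real.tendsto_exp_atBot.comp h1
      have := h2.const_mul (2 : ℝ)
      simpa using this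
    have hup : ∀ p : ℕ, ((hebbScoreModel α p) (hebbSuccess p)).toReal ≤ 1 := by
      intro p
      have h := prob_le_one (μ := hebbScoreModel α p) (s := hebbSuccess p)
      simpa using ENNReal.toReal_mono ENNReal.one_ne_top h
    have hlow : ∀ p : ℕ, 2 ≤ p →
        1 - 2 * rexp ((2 - 1/(4*α)) * Real.log p)
          ≤ ((hebbScoreModel α p) (hebbSuccess p)).toReal := by
      intro p hp
      have hp2 : (2:ℝ) ≤ (p:ℝ) := by exact_mod_cast hp
      have hp1 : (1:ℝ) < (p:ℝ) := by linarith
      have hp0 : (0:ℝ) < (p:ℝ) := by linarith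
      set L := Real.log p with hLdef
      have hL : 0 < L := Real.log_pos hp1
      have hvco : (((α / L).toNNReal) : ℝ) = α / L := Real.coe_toNNReal _ (by positivity)
      have hv : ((α / L).toNNReal) ≠ 0 := by
        have h0 : 0 < ((α / L).toNNReal) := Real.toNNReal_pos.mpr (by positivity)
        exact h0.ne'
      have hfail := hebb_fail_le p hv
      rw [← hebbScoreModel_eq α p] at hfail
      have hfin : ((p : ℝ≥0∞))^2 * ENNReal.ofReal (2 * rexp (-1/(4*((α / L).toNNReal:ℝ)))) ≠ ⊤ := by
        apply ENNReal.mul_ne_top (by simp) ENNReal.ofReal_ne_top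
      have h1 := ENNReal.toReal_mono hfin hfail
      rw [ENNReal.toReal_mul, ENNReal.toReal_pow, ENNReal.toReal_natCast,
        ENNReal.toReal_ofReal (by positivity)] at h1
      have heq : (p:ℝ)^2 * (2 * rexp (-1/(4*((α / L).toNNReal:ℝ))))
          = 2 * rexp ((2 - 1/(4*α)) * L) := by
        rw [hvco]
        have hpe : (p:ℝ) = rexp L := (Real.exp_log hp0).symm
        rw [hpe]
        rw [show rexp L ^ 2 = rexp (2 * L) by
          rw [show (2:ℝ) * L = ((2:ℕ):ℝ) * L by norm_num, Real.exp_nat_mul]]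
        rw [show rexp (2*L) * (2 * rexp (-1/(4*(α/L)))) = 2 * (rexp (2*L) * rexp (-1/(4*(α/L)))) by ring,
          ← Real.exp_add]
        congr 1
        field_simp
        ring
      rw [heq] at h1
      have hcompl := prob_compl_eq_one_sub (μ := hebbScoreModel α p) (hebbSuccess_measurable p)
      have htr : ((hebbScoreModel α p) (hebbSuccess p)ᶜ).toReal
          = 1 - ((hebbScoreModel α p) (hebbSuccess p)).toReal := by
        rw [hcompl, ENNReal.toReal_sub_of_le prob_le_one ENNReal.one_ne_top, ENNReal.toReal_one]
      rw [htr] at h1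
      linarith
    have hg : Tendsto (fun p : ℕ => 1 - 2 * rexp ((2 - 1/(4*α)) * Real.log p)) atTop (nhds 1) := by
      have := (tendsto_const_nhds (x := (1:ℝ)) (f := atTop (α := ℕ))).sub hf0
      simpa using this
    refine tendsto_of_tendsto_of_tendsto_of_le_of_le' hg tendsto_const_nhds ?_ ?_
    · filter_upwards [eventually_ge_atTop 2] with p hp using hlow p hp
    · exact Eventually.of_forall hup
  · -- 1/8 < α : success probability → 0
    intro hα8
    have hβ : 1/(8*α) < 1 := by rw [div_lt_one (by positivity)]; linarith
    have hsa : 0 < Real.sqrt α := Real.sqrt_pos.mpr hα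
    set c₁ : ℝ := 1/(2*Real.sqrt α) with hc₁def
    have hc₁ : 0 ≤ c₁ := by positivity
    set C₀ : ℝ := (Real.sqrt (2*π))⁻¹ * rexp (-2⁻¹) with hC₀def
    have hC₀ : 0 < C₀ := by rw [hC₀def]; positivity
    set wf : ℕ → ℝ :=
      fun p => C₀ * rexp (-(1/(8*α)) * Real.log p - c₁ * Real.sqrt (Real.log p)) with hwfdef
    have hwfpos : ∀ p : ℕ, 0 < wf p := by
      intro p; rw [hwfdef]; positivity
    have hwf_eq : ∀ p : ℕ, 2 ≤ p →
        (Real.sqrt (2*π))⁻¹ * rexp (-(2⁻¹ + Real.sqrt (((α / Real.log p).toNNReal : ℝ)))^2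
            / (2 * ((α / Real.log p).toNNReal : ℝ))) = wf p := by
      intro p hp
      have hp1 : (1:ℝ) < (p:ℝ) := by
        have : (2:ℝ) ≤ (p:ℝ) := by exact_mod_cast hp
        linarith
      set L := Real.log p with hLdef
      have hL : 0 < L := Real.log_pos hp1
      have hvco : (((α / L).toNNReal) : ℝ) = α / L := Real.coe_toNNReal _ (by positivity)
      rw [hvco]
      have hsL : 0 < Real.sqrt L := Real.sqrt_pos.mpr hL
      rw [Real.sqrt_div hα.le L]
      have hwp : wf p = C₀ * rexp (-(1/(8*α)) * L - c₁ * Real.sqrt L) := rfl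
      rw [hwp, hC₀def, mul_assoc, ← Real.exp_add]
      congr 1
      have h1 : Real.sqrt α ^ 2 = α := Real.sq_sqrt hα.le
      have h2 : Real.sqrt L ^ 2 = L := Real.sq_sqrt hL.le
      rw [hc₁def]
      have key : ∀ sa sL : ℝ, 0 < sa → 0 < sL →
          -(2⁻¹ + sa/sL)^2/(2*(sa^2/sL^2))
            = -2⁻¹ + (-(1/(8*sa^2)) * sL^2 - 1/(2*sa) * sL) := by
        intro sa sL hsa' hsL'
        field_simp
        ring
      have inst := key (Real.sqrt α) (Real.sqrt L) hsa hsL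
      rw [h1, h2] at inst
      rw [inst]
    -- the per-p bound
    have hbound : ∀ p : ℕ, 2 ≤ p → ((hebbScoreModel α p) (hebbSuccess p)).toReal
        ≤ rexp (-(((p:ℝ) * wf p) * (1 - rexp (-(((p:ℝ)-1) * wf p))))) := by
      intro p hp
      have hp2 : (2:ℝ) ≤ (p:ℝ) := by exact_mod_cast hp
      have hp1 : (1:ℝ) < (p:ℝ) := by linarith
      set L := Real.log p with hLdef
      have hL : 0 < L := Real.log_pos hp1
      have hvco : (((α / L).toNNReal) : ℝ) = α / L := Real.coe_toNNReal _ (by positivity)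
      have hv : ((α / L).toNNReal) ≠ 0 := by
        have h0 : 0 < ((α / L).toNNReal) := Real.toNNReal_pos.mpr (by positivity)
        exact h0.ne'
      have hsucc := hebb_succ_le p ((α / L).toNNReal)
      rw [← hebbScoreModel_eq α p] at hsucc
      set a := (gaussianReal 1 ((α/L).toNNReal) (Iio (2⁻¹:ℝ))).toReal with hadef
      set u := (gaussianReal 1 ((α/L).toNNReal) (Ici (2⁻¹:ℝ))).toReal with hudef
      set b := (gaussianReal 0 ((α/L).toNNReal) (Iio (2⁻¹:ℝ))).toReal with hbdef
      set t := (gaussianReal 0 ((α/L).toNNReal) (Ioi (2⁻¹:ℝ))).toReal with htdef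
      have h1 : ((hebbScoreModel α p) (hebbSuccess p)).toReal ≤ (u + a * b^(p-1))^p := by
        have hfin1 : gaussianReal 1 ((α/L).toNNReal) (Ici (2⁻¹:ℝ)) ≠ ⊤ := measure_ne_top _ _
        have hfin2 : gaussianReal 1 ((α/L).toNNReal) (Iio (2⁻¹:ℝ))
            * (gaussianReal 0 ((α/L).toNNReal) (Iio (2⁻¹:ℝ)))^(p-1) ≠ ⊤ :=
          ENNReal.mul_ne_top (measure_ne_top _ _) (ENNReal.pow_ne_top (measure_ne_top _ _))
        have h2 := ENNReal.toReal_mono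
          (ENNReal.pow_ne_top (ENNReal.add_ne_top.mpr ⟨hfin1, hfin2⟩)) hsucc
        rw [ENNReal.toReal_pow, ENNReal.toReal_add hfin1 hfin2, ENNReal.toReal_mul,
          ENNReal.toReal_pow] at h2
        exact h2
      have hau : a + u = 1 := by
        have hd := measure_union (μ := gaussianReal 1 ((α/L).toNNReal))
          (Set.Iio_disjoint_Ici (le_refl (2⁻¹:ℝ))) measurableSet_Ici
        rw [Set.Iio_union_Ici, measure_univ] at hd
        have h3 := congrArg ENNReal.toReal hd
        rw [ENNReal.toReal_one, ENNReal.toReal_add (measure_ne_top _ _) (measure_ne_top _ _)] at h3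
        linarith [h3]
      have hat : a = t := by
        rw [hadef, htdef, gauss_shift_Iio, show (2⁻¹:ℝ) - 1 = -2⁻¹ by norm_num, gauss_neg_Iio]
      have hwt : wf p ≤ t := by
        have hlb := gauss_tail_lb ((α/L).toNNReal) hv 2⁻¹ (by norm_num)
        rw [ENNReal.ofReal_le_iff_le_toReal (measure_ne_top _ _)] at hlb
        calc wf p = _ := (hwf_eq p hp).symm
          _ ≤ t := hlb
      have hbt : b + t ≤ 1 := by
        have hdisj : Disjoint (Iio (2⁻¹:ℝ)) (Ioi (2⁻¹:ℝ)) :=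
          (Set.Iio_disjoint_Ici le_rfl).mono_right Set.Ioi_subset_Ici_self
        have hd := measure_union (μ := gaussianReal 0 ((α/L).toNNReal)) hdisj measurableSet_Ioi
        have hle : gaussianReal 0 ((α/L).toNNReal) (Iio (2⁻¹:ℝ) ∪ Ioi (2⁻¹:ℝ)) ≤ 1 :=
          prob_le_one
        rw [hd] at hle
        have h3 := ENNReal.toReal_mono ENNReal.one_ne_top hle
        rw [ENNReal.toReal_one, ENNReal.toReal_add (measure_ne_top _ _) (measure_ne_top _ _)] at h3
        exact h3
      have ha0 : 0 ≤ a := ENNReal.toReal_nonneg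
      have hb0 : 0 ≤ b := ENNReal.toReal_nonneg
      have ha1 : a ≤ 1 := by
        have h := prob_le_one (μ := gaussianReal 1 ((α/L).toNNReal)) (s := Iio (2⁻¹:ℝ))
        simpa using ENNReal.toReal_mono ENNReal.one_ne_top h
      have hb1 : b ≤ 1 := by
        have h := prob_le_one (μ := gaussianReal 0 ((α/L).toNNReal)) (s := Iio (2⁻¹:ℝ))
        simpa using ENNReal.toReal_mono ENNReal.one_ne_top h
      have hw0 : 0 ≤ wf p := (hwfpos p).le
      have hYnn : 0 ≤ ((p:ℝ)-1) * wf p := mul_nonneg (by linarith) hw0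
      have hbexp : b^(p-1) ≤ rexp (-(((p:ℝ)-1) * wf p)) := by
        have hb1w : b ≤ 1 - wf p := by linarith
        calc b^(p-1) ≤ (rexp (-(wf p)))^(p-1) :=
              pow_le_pow_left₀ hb0 (le_trans hb1w (Real.one_sub_le_exp_neg _)) _
          _ = rexp (((p-1:ℕ):ℝ) * (-(wf p))) := (Real.exp_nat_mul _ _).symm
          _ = rexp (-(((p:ℝ)-1) * wf p)) := by
              rw [Nat.cast_sub (by omega : 1 ≤ p), Nat.cast_one]; ring_nf
      set c := a * (1 - b^(p-1)) with hcdef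
      have hbp1 : b^(p-1) ≤ 1 := pow_le_one₀ hb0 hb1
      have hbpnn : 0 ≤ b^(p-1) := pow_nonneg hb0 _
      have hc0 : 0 ≤ c := mul_nonneg ha0 (by linarith)
      have hc1 : c ≤ 1 := mul_le_one₀ ha1 (by linarith) (by linarith)
      have hu : u = 1 - a := by linarith
      have h4 : u + a * b^(p-1) = 1 - c := by rw [hu, hcdef]; ring
      have h5 : (u + a * b^(p-1))^p ≤ rexp (-((p:ℝ) * c)) := by
        rw [h4]
        calc (1 - c)^p ≤ (rexp (-c))^p :=
              pow_le_pow_left₀ (by linarith) (Real.one_sub_le_exp_neg c) p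
          _ = rexp ((p:ℕ) * (-c)) := (Real.exp_nat_mul _ _).symm
          _ = rexp (-((p:ℝ) * c)) := by ring_nf
      have h6 : ((p:ℝ) * wf p) * (1 - rexp (-(((p:ℝ)-1) * wf p))) ≤ (p:ℝ) * c := by
        have hfac : 0 ≤ 1 - rexp (-(((p:ℝ)-1) * wf p)) := by
          have he : rexp (-(((p:ℝ)-1) * wf p)) ≤ rexp 0 :=
            Real.exp_le_exp.mpr (by linarith)
          rw [Real.exp_zero] at he
          linarith
        have hwa : wf p ≤ a := by rw [hat]; exact hwt
        have hic : 1 - rexp (-(((p:ℝ)-1) * wf p)) ≤ 1 - b^(p-1) := by linarith [hbexp]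
        calc ((p:ℝ) * wf p) * (1 - rexp (-(((p:ℝ)-1) * wf p)))
            = (p:ℝ) * (wf p * (1 - rexp (-(((p:ℝ)-1) * wf p)))) := by ring
          _ ≤ (p:ℝ) * (a * (1 - b^(p-1))) := by
              apply mul_le_mul_of_nonneg_left _ (by positivity)
              exact mul_le_mul hwa hic hfac ha0
          _ = (p:ℝ) * c := by rw [hcdef]
      refine le_trans (le_trans h1 h5) (Real.exp_le_exp.mpr ?_)
      linarith
    -- asymptotics
    have hXp : Tendsto (fun p : ℕ => (p:ℝ) * wf p) atTop atTop := by
      have hδ : 0 < 1 - 1/(8*α) := by linarith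
      have hcore := tendsto_lin_sub_sqrt (1 - 1/(8*α)) c₁ hδ
      have hcomp := hcore.comp tendsto_log_nat
      have hexp := (Real.tendsto_exp_atTop.comp hcomp).const_mul_atTop hC₀
      apply hexp.congr'
      filter_upwards [eventually_ge_atTop 1] with p hp
      have hp0 : (0:ℝ) < (p:ℝ) := by
        have : (1:ℝ) ≤ (p:ℝ) := by exact_mod_cast hp
        linarith
      have hpe : (p:ℝ) = rexp (Real.log p) := (Real.exp_log hp0).symm
      show C₀ * rexp ((1 - 1/(8*α)) * Real.log (p:ℝ) - c₁ * Real.sqrt (Real.log (p:ℝ)))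
          = (p:ℝ) * wf p
      have hwp : wf p = C₀ * rexp (-(1/(8*α)) * Real.log (p:ℝ) - c₁ * Real.sqrt (Real.log (p:ℝ))) := rfl
      rw [hwp]
      rw [show (1 - 1/(8*α)) * Real.log (p:ℝ) - c₁ * Real.sqrt (Real.log (p:ℝ))
          = Real.log (p:ℝ) + (-(1/(8*α)) * Real.log (p:ℝ) - c₁ * Real.sqrt (Real.log (p:ℝ))) by ring]
      rw [Real.exp_add]
      rw [← hpe]
      ring
    have hYp : Tendsto (fun p : ℕ => ((p:ℝ)-1) * wf p) atTop atTop := by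
      apply tendsto_atTop_mono' atTop (f₁ := fun p : ℕ => 2⁻¹ * ((p:ℝ) * wf p))
      · filter_upwards [eventually_ge_atTop 2] with p hp
        have hp2 : (2:ℝ) ≤ (p:ℝ) := by exact_mod_cast hp
        have hw0 := (hwfpos p).le
        have hkey := mul_nonneg (show (0:ℝ) ≤ (p:ℝ)/2 - 1 by linarith) hw0
        nlinarith [hkey]
      · exact Tendsto.const_mul_atTop (by norm_num) hXp
    have hD : Tendsto (fun p : ℕ => 1 - rexp (-(((p:ℝ)-1) * wf p))) atTop (nhds 1) := by
      have h1 : Tendsto (fun p : ℕ => -(((p:ℝ)-1) * wf p)) atTop atBot :=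
        tendsto_neg_atBot_iff.mpr hYp
      have h2 := Real.tendsto_exp_atBot.comp h1
      have h3 := (tendsto_const_nhds (x := (1:ℝ)) (f := atTop (α := ℕ))).sub h2
      simpa using h3
    have hZ : Tendsto
        (fun p : ℕ => ((p:ℝ) * wf p) * (1 - rexp (-(((p:ℝ)-1) * wf p)))) atTop atTop :=
      hXp.atTop_mul_pos zero_lt_one hD
    have hE : Tendsto
        (fun p : ℕ => rexp (-(((p:ℝ) * wf p) * (1 - rexp (-(((p:ℝ)-1) * wf p))))))
        atTop (nhds 0) :=
      Real.tendsto_exp_atBot.comp (tendsto_neg_atBot_iff.mpr hZ)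
    refine tendsto_of_tendsto_of_tendsto_of_le_of_le' tendsto_const_nhds hE ?_ ?_
    · exact Eventually.of_forall fun p => ENNReal.toReal_nonneg
    · filter_upwards [eventually_ge_atTop 2] with p hp using hbound p hp
end

section
/- For α > 0 define J_α(x) = (x − 1)²/(2α) + max(x²/(2α) − 1, 0) for x ∈ ℝ. Then inf_{x ∈ ℝ} J_α(x) equals 1/(4α) − 1 if 0 < α ≤ 1/8, equals (1 − √(2α))²/(2α) if 1/8 ≤ α ≤ 1/2, and equals 0 if α ≥ 1/2. In particular, inf_{x ∈ ℝ} J_α(x) > 1 if and only if α < 1/8. -/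
/-- The rate function `J_α(x) = (x - 1)²/(2α) + max(x²/(2α) - 1, 0)`. -/
noncomputable def rateJ (α x : ℝ) : ℝ :=
  (x - 1) ^ 2 / (2 * α) + max (x ^ 2 / (2 * α) - 1) 0

lemma rateJ_nonneg (α : ℝ) (hα : 0 < α) (x : ℝ) : 0 ≤ rateJ α x := by
  unfold rateJ
  have h2 : (0:ℝ) < 2 * α := by linarith
  positivity

lemma rateJ_bdd (α : ℝ) (hα : 0 < α) : BddBelow (Set.range fun x => rateJ α x) := by
  refine ⟨0, ?_⟩
  rintro y ⟨x, rfl⟩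
  exact rateJ_nonneg α hα x

lemma infA (α : ℝ) (hα : 0 < α) (h8 : α ≤ 1 / 8) :
    (⨅ x : ℝ, rateJ α x) = 1 / (4 * α) - 1 := by
  have h2 : (0:ℝ) < 2 * α := by linarith
  apply le_antisymm
  · have hval : rateJ α (1/2) = 1 / (4 * α) - 1 := by
      unfold rateJ
      rw [max_eq_left]
      · field_simp
        ring
      · rw [sub_nonneg, le_div_iff₀ h2]
        nlinarith
    calc (⨅ x : ℝ, rateJ α x) ≤ rateJ α (1/2) := ciInf_le (rateJ_bdd α hα) _
      _ = 1 / (4 * α) - 1 := hval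
  · apply le_ciInf
    intro x
    have h1 : 1 / (4*α) ≤ ((x-1)^2 + x^2) / (2*α) := by
      rw [div_le_div_iff₀ (by linarith : (0:ℝ) < 4*α) h2]
      nlinarith [mul_nonneg hα.le (sq_nonneg (2*x - 1))]
    have e2 : ((x-1)^2 + x^2) / (2*α) = (x-1)^2 / (2*α) + x^2 / (2*α) := by ring
    calc 1 / (4 * α) - 1 ≤ (x-1)^2 / (2*α) + (x^2 / (2*α) - 1) := by
          rw [e2] at h1; linarith
      _ ≤ rateJ α x := by unfold rateJ; gcongr; exact le_max_left _ _

lemma infB (α : ℝ) (hα : 0 < α) (h8 : 1 / 8 ≤ α) (h2' : α ≤ 1 / 2) :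
    (⨅ x : ℝ, rateJ α x) = (1 - Real.sqrt (2 * α)) ^ 2 / (2 * α) := by
  have h2 : (0:ℝ) < 2 * α := by linarith
  set s := Real.sqrt (2 * α) with hs
  have hs0 : 0 ≤ s := Real.sqrt_nonneg _
  have hs2 : s ^ 2 = 2 * α := Real.sq_sqrt (le_of_lt h2)
  have hshalf : 1/2 ≤ s := by nlinarith
  have hs1 : s ≤ 1 := by nlinarith
  apply le_antisymm
  · have hval : rateJ α s = (1 - s) ^ 2 / (2 * α) := by
      unfold rateJ
      rw [hs2, div_self (ne_of_gt h2)]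
      simp
      ring
    calc (⨅ x : ℝ, rateJ α x) ≤ rateJ α s := ciInf_le (rateJ_bdd α hα) _
      _ = (1 - s) ^ 2 / (2 * α) := hval
  · apply le_ciInf
    intro x
    rcases le_total (x ^ 2) (2 * α) with hx | hx
    · have hmax : max (x ^ 2 / (2 * α) - 1) 0 = 0 := by
        apply max_eq_right
        rw [sub_nonpos, div_le_one h2]
        exact hx
      unfold rateJ
      rw [hmax, add_zero]
      apply div_le_div_of_nonneg_right _ h2.le
      have hxs : x ≤ s := by nlinarith
      nlinarith [mul_nonneg (sub_nonneg.2 hxs) (by linarith : (0:ℝ) ≤ 2 - s - x)]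
    · have hkey : (1 - s)^2 + 2 * α ≤ (x-1)^2 + x^2 := by
        rcases le_total s x with h | h
        · nlinarith [mul_nonneg (sub_nonneg.2 h) (by linarith : (0:ℝ) ≤ x + s - 1)]
        · nlinarith
      have hdiv : ((1 - s)^2 + 2 * α) / (2*α) ≤ ((x-1)^2 + x^2) / (2*α) :=
        div_le_div_of_nonneg_right hkey h2.le
      have e1 : ((1 - s)^2 + 2 * α) / (2*α) = (1 - s)^2 / (2*α) + 1 := by
        field_simp
      have e2 : ((x-1)^2 + x^2) / (2*α) = (x-1)^2 / (2*α) + x^2/(2*α) := by ring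
      calc (1 - s) ^ 2 / (2 * α) ≤ (x-1)^2 / (2*α) + (x^2/(2*α) - 1) := by
            rw [e1, e2] at hdiv; linarith
        _ ≤ rateJ α x := by unfold rateJ; gcongr; exact le_max_left _ _

lemma infC (α : ℝ) (hα : 0 < α) (h2' : 1 / 2 ≤ α) :
    (⨅ x : ℝ, rateJ α x) = 0 := by
  have h2 : (0:ℝ) < 2 * α := by linarith
  apply le_antisymm
  · have hval : rateJ α 1 = 0 := by
      unfold rateJ
      rw [max_eq_right]
      · norm_num
      · rw [sub_nonpos, div_le_one h2]
        nlinarith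
    calc (⨅ x : ℝ, rateJ α x) ≤ rateJ α 1 := ciInf_le (rateJ_bdd α hα) _
      _ = 0 := hval
  · exact le_ciInf (rateJ_nonneg α hα)

theorem stmt4 (α : ℝ) (hα : 0 < α) :
    ((α ≤ 1 / 8 → (⨅ x : ℝ, rateJ α x) = 1 / (4 * α) - 1) ∧
     (1 / 8 ≤ α → α ≤ 1 / 2 →
        (⨅ x : ℝ, rateJ α x) = (1 - Real.sqrt (2 * α)) ^ 2 / (2 * α)) ∧
     (1 / 2 ≤ α → (⨅ x : ℝ, rateJ α x) = 0)) ∧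
    (1 < (⨅ x : ℝ, rateJ α x) ↔ α < 1 / 8) := by
  refine ⟨⟨infA α hα, infB α hα, infC α hα⟩, ?_⟩
  constructor
  · intro h
    by_contra h'
    push_neg at h'
    rcases le_total α (1/2) with hle | hle
    · rw [infB α hα h' hle] at h
      have h2 : (0:ℝ) < 2 * α := by linarith
      have hs2 : Real.sqrt (2*α) ^ 2 = 2 * α := Real.sq_sqrt (le_of_lt h2)
      have hshalf : 1/2 ≤ Real.sqrt (2*α) := by nlinarith [Real.sqrt_nonneg (2*α)]
      have : (1 - Real.sqrt (2*α))^2 / (2*α) ≤ 1 := by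
        rw [div_le_one h2]
        nlinarith
      linarith
    · rw [infC α hα hle] at h
      linarith
  · intro h
    rw [infA α hα (le_of_lt h)]
    have : 2 < 1 / (4 * α) := by
      rw [lt_div_iff₀ (by linarith : (0:ℝ) < 4*α)]
      linarith
    linarith
end

section
/- Let k ≥ 1 be an integer and let Φ denote the cumulative distribution function of the standard Gaussian distribution on ℝ. Then there exists a constant C_k > 0 (depending only on k) such that lim_{m → ∞} m^k · exp( (k/(2(k+1))) m² ) · E_{ξ ~ N(0,1)}[ Φ(ξ − m)^k ] = C_k. -/
open MeasureTheory ProbabilityTheory Filter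

/-- The standard normal cumulative distribution function
`Φ(x) = P[N(0,1) ≤ x]`. -/
noncomputable def stdNormalCDF (x : ℝ) : ℝ :=
  ((gaussianReal 0 1) (Set.Iic x)).toReal

namespace Stmt11Aux

open Real Set
open scoped ENNReal NNReal

/-- the standard normal density -/
noncomputable def npdf (x : ℝ) : ℝ := (Real.sqrt (2 * π))⁻¹ * Real.exp (-x ^ 2 / 2)

lemma npdf_eq (x : ℝ) : gaussianPDFReal 0 1 x = npdf x := by
  simp [gaussianPDFReal, npdf]

lemma npdf_nonneg (x : ℝ) : 0 ≤ npdf x :=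
  mul_nonneg (inv_nonneg.2 (Real.sqrt_nonneg _)) (Real.exp_pos _).le

lemma npdf_pos (x : ℝ) : 0 < npdf x := by
  have h : 0 < Real.sqrt (2 * π) := Real.sqrt_pos.2 (by positivity)
  exact mul_pos (inv_pos.2 h) (Real.exp_pos _)

lemma integrable_npdf : Integrable npdf := by
  have := integrable_gaussianPDFReal 0 1
  simpa [funext npdf_eq] using this

lemma continuous_npdf : Continuous npdf := by
  unfold npdf; fun_prop

lemma hasDerivAt_npdf (x : ℝ) : HasDerivAt npdf (-x * npdf x) x := by
  unfold npdf
  have h : HasDerivAt (fun x : ℝ => -x ^ 2 / 2) (-x) x := by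
    have h2 := (((hasDerivAt_pow 2 x).neg).div_const 2)
    exact h2.congr_deriv (by rw [show (2:ℕ) - 1 = 1 from rfl, pow_one]; push_cast; ring)
  have := (h.exp).const_mul (Real.sqrt (2 * π))⁻¹
  exact this.congr_deriv (by ring)

lemma cdf_eq (x : ℝ) : stdNormalCDF x = ∫ u in Iic x, npdf u := by
  rw [stdNormalCDF, gaussianReal_apply_eq_integral 0 one_ne_zero (Iic x)]
  rw [ENNReal.toReal_ofReal]
  · simp_rw [npdf_eq]
  · exact setIntegral_nonneg measurableSet_Iic fun u _ => (npdf_eq u) ▸ npdf_nonneg u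

lemma cdf_nonneg (x : ℝ) : 0 ≤ stdNormalCDF x := ENNReal.toReal_nonneg

lemma cdf_le_one (x : ℝ) : stdNormalCDF x ≤ 1 := by
  rw [stdNormalCDF]
  have h := prob_le_one (μ := gaussianReal 0 1) (s := Iic x)
  exact ENNReal.toReal_le_of_le_ofReal zero_le_one (by simpa using h)

lemma cdf_monotone : Monotone stdNormalCDF := by
  intro a b hab
  rw [stdNormalCDF, stdNormalCDF]
  exact ENNReal.toReal_mono (measure_ne_top _ _) (measure_mono (Iic_subset_Iic.2 hab))

lemma cdf_measurable : Measurable stdNormalCDF := cdf_monotone.measurable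


lemma npdf_tendsto_atBot : Tendsto npdf atBot (nhds 0) := by
  have h2 : Tendsto (fun u : ℝ => u ^ 2) atBot atTop := by
    have ha : Tendsto (fun u : ℝ => |u| ^ 2) atBot atTop :=
      (tendsto_pow_atTop (two_ne_zero)).comp tendsto_abs_atBot_atTop
    exact ha.congr fun u => sq_abs u
  have h1 : Tendsto (fun u : ℝ => -u ^ 2 / 2) atBot atBot :=
    Tendsto.atBot_div_const (by norm_num) (tendsto_neg_atTop_atBot.comp h2)
  have h3 := (Real.tendsto_exp_atBot.comp h1).const_mul (Real.sqrt (2 * π))⁻¹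
  rw [mul_zero] at h3
  exact h3.congr fun u => rfl

lemma npdf_mul_exp (x : ℝ) : npdf x * Real.exp (x ^ 2 / 2) = (Real.sqrt (2 * π))⁻¹ := by
  unfold npdf
  rw [mul_assoc, ← Real.exp_add, neg_div, neg_add_cancel, Real.exp_zero, mul_one]

lemma integrable_mul_npdf : Integrable (fun u : ℝ => u * npdf u) := by
  have h := (integrable_mul_exp_neg_mul_sq (b := 1/2) (by norm_num)).const_mul
    (Real.sqrt (2 * π))⁻¹
  convert h using 2 with u
  unfold npdf; ring_nf

/-- `∫_{-∞}^x u φ(u) du = -φ(x)` -/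
lemma integral_mul_npdf_Iic (x : ℝ) : ∫ u in Iic x, u * npdf u = -npdf x := by
  have hderiv : ∀ u ∈ Iic x, HasDerivAt (fun y => -npdf y) (u * npdf u) u := by
    intro u _
    exact (hasDerivAt_npdf u).neg.congr_deriv (by ring)
  have htend : Tendsto (fun y => -npdf y) atBot (nhds 0) := by
    simpa using npdf_tendsto_atBot.neg
  simpa using integral_Iic_of_hasDerivAt_of_tendsto' hderiv
    integrable_mul_npdf.integrableOn htend

/-- Mills upper bound: for `x < 0`, `Φ(x) ≤ φ(x)/(-x)`. -/
lemma mills_upper {x : ℝ} (hx : x < 0) : stdNormalCDF x ≤ npdf x / (-x) := by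
  rw [cdf_eq]
  have h1 : ∀ u ∈ Iic x, npdf u ≤ x⁻¹ * (u * npdf u) := by
    intro u hu
    have hu' : u ≤ x := hu
    have h : 1 ≤ u / x := (one_le_div_of_neg hx).2 hu'
    have h2 : x⁻¹ * (u * npdf u) = (u / x) * npdf u := by ring
    rw [h2]
    nlinarith [npdf_nonneg u]
  have h2 : ∫ u in Iic x, npdf u ≤ ∫ u in Iic x, x⁻¹ * (u * npdf u) :=
    setIntegral_mono_on integrable_npdf.integrableOn
      ((integrable_mul_npdf.const_mul x⁻¹).integrableOn) measurableSet_Iic h1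
  rw [integral_const_mul, integral_mul_npdf_Iic] at h2
  calc ∫ u in Iic x, npdf u ≤ x⁻¹ * -npdf x := h2
    _ = npdf x / (-x) := by rw [div_neg, inv_mul_eq_div, neg_div]

set_option maxHeartbeats 1000000 in
/-- Mills lower bound: for `x ≤ -1`, `Φ(x) ≥ (1/(-x))(1 - 1/x²) φ(x)`. -/
lemma mills_lower {x : ℝ} (hx : x ≤ -1) :
    npdf x * (1 / (-x)) * (1 - 1 / x ^ 2) ≤ stdNormalCDF x := by
  have hx0 : x < 0 := lt_of_le_of_lt hx (by norm_num)
  set G : ℝ → ℝ := fun u => npdf u * ((u ^ 3)⁻¹ - u⁻¹) with hG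
  have hderiv : ∀ u ∈ Iio x, HasDerivAt G ((1 - 3 * (u ^ 4)⁻¹) * npdf u) u := by
    intro u hu
    have hu0 : u ≠ 0 := ne_of_lt (lt_trans hu hx0)
    have h1 : HasDerivAt (fun u : ℝ => (u ^ 3)⁻¹ - u⁻¹)
        (-(3 * u ^ 2) / (u ^ 3) ^ 2 - -(u ^ 2)⁻¹) u := by
      have ha : HasDerivAt (fun u : ℝ => (u ^ 3)⁻¹) (-(3 * u ^ 2) / (u ^ 3) ^ 2) u := by
        have := (hasDerivAt_pow 3 u).inv (pow_ne_zero 3 hu0)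
        simp at this
        exact this
      exact ha.sub (hasDerivAt_inv hu0)
    have h2 := (hasDerivAt_npdf u).mul h1
    refine h2.congr_deriv ?_
    have h3 : npdf u * (-(3 * u ^ 2) / (u ^ 3) ^ 2 - -(u ^ 2)⁻¹) +
        ((u ^ 3)⁻¹ - u⁻¹) * (-u * npdf u) = (1 - 3 * (u ^ 4)⁻¹) * npdf u := by
      field_simp
      ring
    rw [← h3]; ring
  have hint : IntegrableOn (fun u : ℝ => (1 - 3 * (u ^ 4)⁻¹) * npdf u) (Iic x) := by
    refine Integrable.mono' ((integrable_npdf.const_mul 4).integrableOn) ?_ ?_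
    · refine AEStronglyMeasurable.restrict ?_
      refine (Measurable.aestronglyMeasurable ?_)
      have : Measurable npdf := continuous_npdf.measurable
      fun_prop
    · rw [ae_restrict_iff' measurableSet_Iic]
      refine ae_of_all _ fun u hu => ?_
      have hu1 : u ≤ -1 := le_trans hu hx
      have hu4 : 1 ≤ u ^ 4 := by nlinarith [sq_nonneg (u + 1), sq_nonneg (u ^ 2 - 1), sq_nonneg u]
      have h0 : 0 < u ^ 4 := by positivity
      have hinv : (u ^ 4)⁻¹ ≤ 1 := by
        rw [inv_le_one_iff₀]; right; exact hu4
      have hinv0 : 0 < (u ^ 4)⁻¹ := by positivity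
      rw [Real.norm_eq_abs, abs_mul, abs_of_nonneg (npdf_nonneg u)]
      have : |1 - 3 * (u ^ 4)⁻¹| ≤ 4 := by
        rw [abs_le]; constructor <;> nlinarith
      nlinarith [npdf_nonneg u]
  have hinvbot : Tendsto (fun u : ℝ => u⁻¹) atBot (nhds (0:ℝ)) := by
    have h := ((tendsto_inv_atTop_zero (𝕜 := ℝ)).comp (tendsto_neg_atBot_atTop : Tendsto (fun u : ℝ => -u) atBot atTop)).neg
    rw [neg_zero] at h
    exact h.congr fun u => by simp [Function.comp, inv_neg]
  have htend : Tendsto G atBot (nhds 0) := by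
    have h1 : Tendsto (fun u : ℝ => (u ^ 3)⁻¹ - u⁻¹) atBot (nhds 0) := by
      have ha : Tendsto (fun u : ℝ => (u ^ 3)⁻¹) atBot (nhds 0) := by
        have := hinvbot.pow 3
        simpa [← inv_pow] using this
      simpa using ha.sub hinvbot
    simpa using npdf_tendsto_atBot.mul h1
  have heval : ∫ u in Iic x, (1 - 3 * (u ^ 4)⁻¹) * npdf u = G x := by
    have hcont : ContinuousWithinAt G (Iic x) x := by
      have hx0' : x ≠ 0 := ne_of_lt hx0
      have hca : ContinuousAt G x :=
        (continuous_npdf.continuousAt.mul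
          ((((continuous_pow 3).continuousAt).inv₀ (pow_ne_zero 3 hx0')).sub
            (continuousAt_inv₀ hx0')))
      exact hca.continuousWithinAt
    have := integral_Iic_of_hasDerivAt_of_tendsto hcont hderiv hint htend
    simpa using this
  have hmono : ∫ u in Iic x, (1 - 3 * (u ^ 4)⁻¹) * npdf u ≤ ∫ u in Iic x, npdf u := by
    refine setIntegral_mono_on hint integrable_npdf.integrableOn measurableSet_Iic ?_
    intro u hu
    have h0 : (0:ℝ) < u ^ 4 := by
      have : u ≠ 0 := ne_of_lt (lt_of_le_of_lt (le_trans hu hx) (by norm_num))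
      positivity
    nlinarith [npdf_nonneg u, inv_pos.2 h0]
  rw [cdf_eq]
  have hGx : G x = npdf x * (1 / (-x)) * (1 - 1 / x ^ 2) := by
    rw [hG]
    ring
  calc npdf x * (1 / (-x)) * (1 - 1 / x ^ 2) = G x := hGx.symm
    _ = ∫ u in Iic x, (1 - 3 * (u ^ 4)⁻¹) * npdf u := heval.symm
    _ ≤ ∫ u in Iic x, npdf u := hmono

/-- The Mills ratio limit. -/
lemma tendsto_mills :
    Tendsto (fun y : ℝ => y * stdNormalCDF (-y) * Real.exp (y ^ 2 / 2)) atTop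
      (nhds (Real.sqrt (2 * π))⁻¹) := by
  have hlow : Tendsto (fun y : ℝ => (Real.sqrt (2 * π))⁻¹ * (1 - 1 / y ^ 2)) atTop
      (nhds (Real.sqrt (2 * π))⁻¹) := by
    have h1 : Tendsto (fun y : ℝ => 1 / y ^ 2) atTop (nhds 0) := by
      have := ((tendsto_inv_atTop_zero (𝕜 := ℝ)).comp
        (tendsto_pow_atTop (two_ne_zero)))
      simpa [Function.comp_def, one_div] using this
    have h2 : Tendsto (fun y : ℝ => 1 - 1 / y ^ 2) atTop (nhds 1) := by
      simpa using (tendsto_const_nhds (x := (1:ℝ)) (f := atTop)).sub h1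
    simpa using h2.const_mul (Real.sqrt (2 * π))⁻¹
  refine tendsto_of_tendsto_of_tendsto_of_le_of_le' hlow tendsto_const_nhds ?_ ?_
  · filter_upwards [eventually_ge_atTop (1:ℝ)] with y hy
    have hy0 : 0 < y := lt_of_lt_of_le one_pos hy
    have hml := mills_lower (x := -y) (by linarith)
    have hkey : npdf (-y) * Real.exp (y ^ 2 / 2) = (Real.sqrt (2 * π))⁻¹ := by
      have := npdf_mul_exp (-y)
      simpa [neg_pow] using this
    have hexp : 0 < Real.exp (y ^ 2 / 2) := Real.exp_pos _
    have h1 : npdf (-y) * (1 / y) * (1 - 1 / y ^ 2) ≤ stdNormalCDF (-y) := by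
      simpa [neg_neg, neg_pow] using hml
    have h2 : y * (npdf (-y) * (1 / y) * (1 - 1 / y ^ 2)) * Real.exp (y ^ 2 / 2) ≤
        y * stdNormalCDF (-y) * Real.exp (y ^ 2 / 2) := by
      have := mul_le_mul_of_nonneg_left h1 hy0.le
      exact mul_le_mul_of_nonneg_right this hexp.le
    refine le_trans (le_of_eq ?_) h2
    have hyne : y ≠ 0 := hy0.ne'
    have hinv : y * (1 / y) = 1 := mul_one_div_cancel hyne
    calc (Real.sqrt (2 * π))⁻¹ * (1 - 1 / y ^ 2)
        = (npdf (-y) * Real.exp (y ^ 2 / 2)) * (1 - 1 / y ^ 2) * (y * (1 / y)) := by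
          rw [hkey, hinv, mul_one]
      _ = y * (npdf (-y) * (1 / y) * (1 - 1 / y ^ 2)) * Real.exp (y ^ 2 / 2) := by ring
  · filter_upwards [eventually_ge_atTop (1:ℝ)] with y hy
    have hy0 : 0 < y := lt_of_lt_of_le one_pos hy
    have hmu := mills_upper (x := -y) (by linarith)
    have hkey : npdf (-y) * Real.exp (y ^ 2 / 2) = (Real.sqrt (2 * π))⁻¹ := by
      have := npdf_mul_exp (-y)
      simpa [neg_pow] using this
    have hexp : 0 < Real.exp (y ^ 2 / 2) := Real.exp_pos _
    have h1 : stdNormalCDF (-y) ≤ npdf (-y) / y := by simpa using hmu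
    have h2 : y * stdNormalCDF (-y) * Real.exp (y ^ 2 / 2) ≤
        y * (npdf (-y) / y) * Real.exp (y ^ 2 / 2) := by
      have := mul_le_mul_of_nonneg_left h1 hy0.le
      exact mul_le_mul_of_nonneg_right this hexp.le
    refine le_trans h2 (le_of_eq ?_)
    have h3 : y * (npdf (-y) / y) = npdf (-y) := by field_simp
    rw [h3, hkey]

lemma integral_gaussian_eq (f : ℝ → ℝ) :
    ∫ ξ, f ξ ∂(gaussianReal 0 1) = ∫ x, f x * npdf x := by
  rw [gaussianReal_of_var_ne_zero 0 one_ne_zero]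
  have hd : (gaussianPDF 0 1) = fun x => ((npdf x).toNNReal : ℝ≥0∞) := by
    funext x
    rw [gaussianPDF, npdf_eq]
    rfl
  rw [hd, integral_withDensity_eq_integral_smul
    (f := fun x => (npdf x).toNNReal) (continuous_npdf.measurable.real_toNNReal) f]
  congr 1
  funext x
  rw [NNReal.smul_def, Real.coe_toNNReal _ (npdf_nonneg x)]
  exact mul_comm _ _

/-- The rescaled integrand factor. -/
noncomputable def gfun (s t : ℝ) : ℝ :=
  s * stdNormalCDF (t - s) * Real.exp (s ^ 2 / 2 - s * t)

lemma gfun_nonneg {s : ℝ} (hs : 0 ≤ s) (t : ℝ) : 0 ≤ gfun s t :=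
  mul_nonneg (mul_nonneg hs (cdf_nonneg _)) (Real.exp_pos _).le

lemma sqrt_two_pi_ge_two : (2:ℝ) ≤ Real.sqrt (2 * π) := by
  have h4 : (4:ℝ) ≤ 2 * π := by nlinarith [Real.pi_gt_three]
  have : Real.sqrt 4 ≤ Real.sqrt (2 * π) := Real.sqrt_le_sqrt h4
  rwa [show (4:ℝ) = 2 ^ 2 by norm_num, Real.sqrt_sq (by norm_num : (0:ℝ) ≤ 2)] at this

lemma inv_sqrt_two_pi_le : (Real.sqrt (2 * π))⁻¹ ≤ 1 / 2 := by
  rw [one_div]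
  exact inv_anti₀ (by norm_num) sqrt_two_pi_ge_two

lemma gfun_le {s : ℝ} (hs : 1 ≤ s) (t : ℝ) : gfun s t ≤ 1 + 2 * |t| := by
  have hs0 : (0:ℝ) < s := lt_of_lt_of_le one_pos hs
  rcases le_or_gt t (s / 2) with hA | hAB
  · -- t ≤ s/2 : Mills bound
    have hst : 0 < s - t := by linarith
    have hts : t - s < 0 := by linarith
    have hΦ : stdNormalCDF (t - s) ≤ npdf (t - s) / (s - t) := by
      have := mills_upper hts
      rwa [neg_sub] at this
    have hE : 0 < Real.exp (s ^ 2 / 2 - s * t) := Real.exp_pos _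
    have hkey : npdf (t - s) * Real.exp (s ^ 2 / 2 - s * t)
        = (Real.sqrt (2 * π))⁻¹ * Real.exp (-t ^ 2 / 2) := by
      unfold npdf
      rw [mul_assoc, ← Real.exp_add]
      have he : -(t - s) ^ 2 / 2 + (s ^ 2 / 2 - s * t) = -t ^ 2 / 2 := by ring
      rw [he]
    have h1 : gfun s t ≤ (s / (s - t)) * (npdf (t - s) * Real.exp (s ^ 2 / 2 - s * t)) := by
      unfold gfun
      have hmul := mul_le_mul_of_nonneg_right
        (mul_le_mul_of_nonneg_left hΦ hs0.le) hE.le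
      calc s * stdNormalCDF (t - s) * Real.exp (s ^ 2 / 2 - s * t)
          ≤ s * (npdf (t - s) / (s - t)) * Real.exp (s ^ 2 / 2 - s * t) := hmul
        _ = (s / (s - t)) * (npdf (t - s) * Real.exp (s ^ 2 / 2 - s * t)) := by
            field_simp
    have hfrac : s / (s - t) ≤ 2 := by rw [div_le_iff₀ hst]; linarith
    have hfrac0 : 0 ≤ s / (s - t) := div_nonneg hs0.le hst.le
    have hexple : Real.exp (-t ^ 2 / 2) ≤ 1 :=
      Real.exp_le_one_iff.2 (by nlinarith [sq_nonneg t])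
    have hnn : 0 ≤ (Real.sqrt (2 * π))⁻¹ * Real.exp (-t ^ 2 / 2) := by
      have := Real.sqrt_nonneg (2 * π); positivity
    have h2 : (s / (s - t)) * ((Real.sqrt (2 * π))⁻¹ * Real.exp (-t ^ 2 / 2))
        ≤ 2 * ((1 / 2) * 1) := by
      refine mul_le_mul hfrac ?_ hnn (by norm_num)
      exact mul_le_mul inv_sqrt_two_pi_le hexple (Real.exp_pos _).le (by norm_num)
    have h3 := le_trans (hkey ▸ h1) h2
    nlinarith [abs_nonneg t]
  · rcases le_or_gt t s with hB | hC
    · -- s/2 < t ≤ s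
      have hE1 : Real.exp (s ^ 2 / 2 - s * t) ≤ 1 :=
        Real.exp_le_one_iff.2 (by nlinarith)
      have hΦ1 := cdf_le_one (t - s)
      have hΦ0 := cdf_nonneg (t - s)
      have ht0 : 0 < t := by linarith
      have h01 : stdNormalCDF (t - s) * Real.exp (s ^ 2 / 2 - s * t) ≤ 1 :=
        mul_le_one₀ hΦ1 (Real.exp_pos _).le hE1
      have hgs : gfun s t ≤ s := by
        unfold gfun
        calc s * stdNormalCDF (t - s) * Real.exp (s ^ 2 / 2 - s * t)
            = s * (stdNormalCDF (t - s) * Real.exp (s ^ 2 / 2 - s * t)) := by ring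
          _ ≤ s * 1 := mul_le_mul_of_nonneg_left h01 hs0.le
          _ = s := mul_one s
      rw [abs_of_pos ht0]
      linarith
    · -- t > s
      have hΦ1 := cdf_le_one (t - s)
      have hΦ0 := cdf_nonneg (t - s)
      have hE2 : Real.exp (s ^ 2 / 2 - s * t) ≤ Real.exp (-s ^ 2 / 2) :=
        Real.exp_le_exp.2 (by nlinarith)
      have h2 : s ≤ Real.exp (s ^ 2 / 2) := by
        nlinarith [Real.add_one_le_exp (s ^ 2 / 2), sq_nonneg (s - 1)]
      have h3 : Real.exp (-s ^ 2 / 2) * Real.exp (s ^ 2 / 2) = 1 := by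
        rw [← Real.exp_add, show -s ^ 2 / 2 + s ^ 2 / 2 = 0 from by ring, Real.exp_zero]
      have hs1 : s * Real.exp (-s ^ 2 / 2) ≤ 1 := by
        nlinarith [mul_nonneg (sub_nonneg.2 h2) (Real.exp_pos (-s ^ 2 / 2)).le,
          Real.exp_pos (-s ^ 2 / 2)]
      have h01 : stdNormalCDF (t - s) * Real.exp (s ^ 2 / 2 - s * t)
          ≤ Real.exp (-s ^ 2 / 2) := by
        have := mul_le_mul hΦ1 hE2 (Real.exp_pos _).le zero_le_one
        rwa [one_mul] at this
      have hgs : gfun s t ≤ s * Real.exp (-s ^ 2 / 2) := by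
        unfold gfun
        calc s * stdNormalCDF (t - s) * Real.exp (s ^ 2 / 2 - s * t)
            = s * (stdNormalCDF (t - s) * Real.exp (s ^ 2 / 2 - s * t)) := by ring
          _ ≤ s * Real.exp (-s ^ 2 / 2) := mul_le_mul_of_nonneg_left h01 hs0.le
      nlinarith [abs_nonneg t]

/-- Pointwise limit of `gfun · t`. -/
lemma gfun_tendsto (t : ℝ) :
    Tendsto (fun s => gfun s t) atTop
      (nhds ((Real.sqrt (2 * π))⁻¹ * Real.exp (-t ^ 2 / 2))) := by
  have ha : Tendsto (fun s : ℝ => s - t) atTop atTop :=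
    tendsto_atTop_add_const_right atTop (-t) tendsto_id
  have h1 : Tendsto (fun s : ℝ => s / (s - t)) atTop (nhds 1) := by
    have hb : Tendsto (fun s : ℝ => t * (s - t)⁻¹) atTop (nhds 0) := by
      have := ((tendsto_inv_atTop_zero (𝕜 := ℝ)).comp ha).const_mul t
      simpa using this
    have hc : Tendsto (fun s : ℝ => 1 + t * (s - t)⁻¹) atTop (nhds 1) := by
      simpa using (tendsto_const_nhds (x := (1:ℝ)) (f := atTop)).add hb
    refine hc.congr' ?_
    filter_upwards [eventually_gt_atTop t] with s hs
    have hne : s - t ≠ 0 := (sub_pos.2 hs).ne'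
    field_simp
    ring
  have h2 : Tendsto
      (fun s : ℝ => (s - t) * stdNormalCDF (-(s - t)) * Real.exp ((s - t) ^ 2 / 2))
      atTop (nhds (Real.sqrt (2 * π))⁻¹) := by
    have := tendsto_mills.comp ha
    exact this.congr fun s => rfl
  have hmul := (h1.mul h2).mul_const (Real.exp (-t ^ 2 / 2))
  rw [one_mul] at hmul
  refine hmul.congr' ?_
  filter_upwards [eventually_gt_atTop t] with s hs
  have hne : s - t ≠ 0 := (sub_pos.2 hs).ne'
  have hcan : s / (s - t) * (s - t) = s := div_mul_cancel₀ s hne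
  have hexp : Real.exp ((s - t) ^ 2 / 2) * Real.exp (-t ^ 2 / 2)
      = Real.exp (s ^ 2 / 2 - s * t) := by
    rw [← Real.exp_add]; congr 1; ring
  unfold gfun
  rw [neg_sub]
  calc s / (s - t) * ((s - t) * stdNormalCDF (t - s) * Real.exp ((s - t) ^ 2 / 2))
        * Real.exp (-t ^ 2 / 2)
      = (s / (s - t) * (s - t)) * stdNormalCDF (t - s)
        * (Real.exp ((s - t) ^ 2 / 2) * Real.exp (-t ^ 2 / 2)) := by ring
    _ = s * stdNormalCDF (t - s) * Real.exp (s ^ 2 / 2 - s * t) := by rw [hcan, hexp]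

end Stmt11Aux

theorem stmt11 (k : ℕ) (hk : 1 ≤ k) :
    ∃ C : ℝ, 0 < C ∧
      Tendsto
        (fun m : ℝ =>
          m ^ k * Real.exp ((k : ℝ) / (2 * (k + 1)) * m ^ 2) *
            ∫ ξ, stdNormalCDF (ξ - m) ^ k ∂(gaussianReal 0 1))
        atTop (nhds C) := by
  classical
  open Real Stmt11Aux in
  set K : ℝ := (k : ℝ) + 1 with hKdef
  have hK0 : (0:ℝ) < K := by positivity
  have hKne : K ≠ 0 := hK0.ne'
  have hsqrt0 : (0:ℝ) < Real.sqrt (2 * π) := Real.sqrt_pos.2 (by positivity)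
  set F : ℝ → ℝ → ℝ := fun s t =>
    K ^ k * (Real.sqrt (2 * π))⁻¹ * (Stmt11Aux.gfun s t) ^ k * Real.exp (-t ^ 2 / 2)
    with hF
  set L : ℝ → ℝ := fun t =>
    K ^ k * (Real.sqrt (2 * π))⁻¹ *
      ((Real.sqrt (2 * π))⁻¹ * Real.exp (-t ^ 2 / 2)) ^ k * Real.exp (-t ^ 2 / 2)
    with hL
  have hLeq : ∀ t : ℝ, L t
      = (K ^ k * (Real.sqrt (2 * π))⁻¹ ^ (k + 1)) * Real.exp (-(K / 2) * t ^ 2) := by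
    intro t
    have hexp : Real.exp (-t ^ 2 / 2) ^ k * Real.exp (-t ^ 2 / 2)
        = Real.exp (-(K / 2) * t ^ 2) := by
      rw [← Real.exp_nat_mul, ← Real.exp_add, hKdef]
      congr 1
      ring
    calc L t = K ^ k * (Real.sqrt (2 * π))⁻¹ *
          (((Real.sqrt (2 * π))⁻¹) ^ k * Real.exp (-t ^ 2 / 2) ^ k) * Real.exp (-t ^ 2 / 2) := by
          rw [hL]; simp only [mul_pow]
      _ = (K ^ k * (Real.sqrt (2 * π))⁻¹ ^ (k + 1)) *
          (Real.exp (-t ^ 2 / 2) ^ k * Real.exp (-t ^ 2 / 2)) := by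
          rw [pow_succ]; ring
      _ = _ := by rw [hexp]
  refine ⟨∫ t, L t, ?_, ?_⟩
  · -- positivity of C
    have hC : ∫ t, L t = (K ^ k * (Real.sqrt (2 * π))⁻¹ ^ (k + 1)) *
        Real.sqrt (π / (K / 2)) := by
      simp_rw [hLeq]
      rw [integral_const_mul, integral_gaussian (K / 2)]
    rw [hC]
    have h1 : 0 < Real.sqrt (π / (K / 2)) := Real.sqrt_pos.2 (by positivity)
    have h2 : 0 < (Real.sqrt (2 * π))⁻¹ := inv_pos.2 hsqrt0
    positivity
  · -- main limit
    have hmain : ∀ s : ℝ,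
        (K * s) ^ k * Real.exp ((k : ℝ) / (2 * K) * (K * s) ^ 2) *
          ∫ ξ, stdNormalCDF (ξ - K * s) ^ k ∂(gaussianReal 0 1) = ∫ t, F s t := by
      intro s
      rw [Stmt11Aux.integral_gaussian_eq (fun ξ => stdNormalCDF (ξ - K * s) ^ k)]
      rw [show (∫ x, stdNormalCDF (x - K * s) ^ k * Stmt11Aux.npdf x)
            = ∫ t, stdNormalCDF (t + (k : ℝ) * s - K * s) ^ k *
              Stmt11Aux.npdf (t + (k : ℝ) * s) from
        (integral_add_right_eq_self
          (fun x => stdNormalCDF (x - K * s) ^ k * Stmt11Aux.npdf x) ((k : ℝ) * s)).symm]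
      rw [← integral_const_mul]
      congr 1
      funext t
      have harg : t + (k : ℝ) * s - K * s = t - s := by rw [hKdef]; ring
      rw [harg]
      simp only [hF]
      unfold Stmt11Aux.npdf Stmt11Aux.gfun
      have e2 : (s * stdNormalCDF (t - s) * Real.exp (s ^ 2 / 2 - s * t)) ^ k
          = s ^ k * stdNormalCDF (t - s) ^ k * Real.exp ((k : ℝ) * (s ^ 2 / 2 - s * t)) := by
        rw [mul_pow, mul_pow, ← Real.exp_nat_mul]
      rw [e2, mul_pow K s k]
      have e3 : Real.exp ((k : ℝ) / (2 * K) * (K * s) ^ 2) *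
            Real.exp (-(t + (k : ℝ) * s) ^ 2 / 2)
          = Real.exp ((k : ℝ) * (s ^ 2 / 2 - s * t)) * Real.exp (-t ^ 2 / 2) := by
        rw [← Real.exp_add, ← Real.exp_add]
        congr 1
        rw [hKdef]
        field_simp
        ring
      linear_combination (K ^ k * s ^ k * stdNormalCDF (t - s) ^ k *
        (Real.sqrt (2 * π))⁻¹) * e3
    -- integrable dominating bound
    have hbound : Integrable (fun t : ℝ =>
        (K ^ k * (Real.sqrt (2 * π))⁻¹) * ((1 + 2 * |t|) ^ k * Real.exp (-t ^ 2 / 2))) := by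
      refine Integrable.const_mul ?_ _
      have hg1 : Integrable (fun t : ℝ => Real.exp ((k : ℝ) * t - t ^ 2 / 2)) := by
        have h := ((integrable_exp_neg_mul_sq (b := (1:ℝ)/2) (by norm_num)).comp_sub_right
          ((k : ℝ))).const_mul (Real.exp ((k : ℝ) ^ 2 / 2))
        refine h.congr (Filter.EventuallyEq.of_eq (funext fun t => ?_))
        rw [← Real.exp_add]
        congr 1
        ring
      have hg2 : Integrable (fun t : ℝ => Real.exp (-((k : ℝ) * t) - t ^ 2 / 2)) := by
        have h := ((integrable_exp_neg_mul_sq (b := (1:ℝ)/2) (by norm_num)).comp_sub_right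
          (-(k : ℝ))).const_mul (Real.exp ((k : ℝ) ^ 2 / 2))
        refine h.congr (Filter.EventuallyEq.of_eq (funext fun t => ?_))
        rw [← Real.exp_add]
        congr 1
        ring
      refine ((hg1.add hg2).const_mul ((3:ℝ) ^ k)).mono' ?_ ?_
      · refine Continuous.aestronglyMeasurable ?_
        fun_prop
      · refine Filter.Eventually.of_forall fun t => ?_
        have habs : (0:ℝ) ≤ 1 + 2 * |t| := by positivity
        have h1 : (1 + 2 * |t|) ≤ 3 * Real.exp |t| := by
          nlinarith [Real.add_one_le_exp |t|, abs_nonneg t, Real.exp_pos |t|]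
        have h2 : (1 + 2 * |t|) ^ k ≤ (3 * Real.exp |t|) ^ k :=
          pow_le_pow_left₀ habs h1 k
        rw [mul_pow, ← Real.exp_nat_mul] at h2
        have h3 : Real.exp ((k : ℝ) * |t|) * Real.exp (-t ^ 2 / 2)
            ≤ Real.exp ((k : ℝ) * t - t ^ 2 / 2) + Real.exp (-((k : ℝ) * t) - t ^ 2 / 2) := by
          rcases abs_cases t with ⟨habs1, _⟩ | ⟨habs1, _⟩
          · rw [habs1]
            have : Real.exp ((k : ℝ) * t) * Real.exp (-t ^ 2 / 2)
                = Real.exp ((k : ℝ) * t - t ^ 2 / 2) := by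
              rw [← Real.exp_add]; congr 1; ring
            rw [this]
            nlinarith [Real.exp_pos (-((k : ℝ) * t) - t ^ 2 / 2)]
          · rw [habs1]
            have : Real.exp ((k : ℝ) * -t) * Real.exp (-t ^ 2 / 2)
                = Real.exp (-((k : ℝ) * t) - t ^ 2 / 2) := by
              rw [← Real.exp_add]; congr 1; ring
            rw [this]
            nlinarith [Real.exp_pos ((k : ℝ) * t - t ^ 2 / 2)]
        have h4 : (1 + 2 * |t|) ^ k * Real.exp (-t ^ 2 / 2)
            ≤ 3 ^ k * (Real.exp ((k : ℝ) * t - t ^ 2 / 2)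
              + Real.exp (-((k : ℝ) * t) - t ^ 2 / 2)) := by
          calc (1 + 2 * |t|) ^ k * Real.exp (-t ^ 2 / 2)
              ≤ (3 ^ k * Real.exp ((k : ℝ) * |t|)) * Real.exp (-t ^ 2 / 2) :=
                mul_le_mul_of_nonneg_right h2 (Real.exp_pos _).le
            _ = 3 ^ k * (Real.exp ((k : ℝ) * |t|) * Real.exp (-t ^ 2 / 2)) := by ring
            _ ≤ _ := mul_le_mul_of_nonneg_left h3 (by positivity)
        rw [Real.norm_eq_abs, abs_of_nonneg (by positivity)]
        exact h4
    -- dominated convergence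
    have hDC : Tendsto (fun s => ∫ t, F s t) atTop (nhds (∫ t, L t)) := by
      refine tendsto_integral_filter_of_dominated_convergence
        (fun t => (K ^ k * (Real.sqrt (2 * π))⁻¹) *
          ((1 + 2 * |t|) ^ k * Real.exp (-t ^ 2 / 2))) ?_ ?_ hbound ?_
      · refine Filter.Eventually.of_forall fun s => ?_
        refine Measurable.aestronglyMeasurable ?_
        have hm : Measurable fun t : ℝ => Stmt11Aux.gfun s t := by
          unfold Stmt11Aux.gfun
          refine Measurable.mul (Measurable.mul measurable_const ?_) ?_
          · exact Stmt11Aux.cdf_measurable.comp (measurable_id.sub_const s)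
          · exact Real.measurable_exp.comp
              (measurable_const.sub (measurable_id.const_mul s))
        simp only [hF]
        refine Measurable.mul (Measurable.mul measurable_const (hm.pow_const k)) ?_
        exact Real.measurable_exp.comp ((measurable_id.pow_const 2).neg.div_const 2)
      · filter_upwards [eventually_ge_atTop (1:ℝ)] with s hs
        refine Filter.Eventually.of_forall fun t => ?_
        have hg0 : 0 ≤ Stmt11Aux.gfun s t :=
          Stmt11Aux.gfun_nonneg (by linarith) t
        have hgb : Stmt11Aux.gfun s t ≤ 1 + 2 * |t| := Stmt11Aux.gfun_le hs t
        have hpow : Stmt11Aux.gfun s t ^ k ≤ (1 + 2 * |t|) ^ k :=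
          pow_le_pow_left₀ hg0 hgb k
        have hc : 0 ≤ K ^ k * (Real.sqrt (2 * π))⁻¹ := by positivity
        have hF0 : 0 ≤ F s t := by
          simp only [hF]
          have := Real.exp_pos (-t ^ 2 / 2)
          positivity
        rw [Real.norm_eq_abs, abs_of_nonneg hF0]
        simp only [hF]
        calc K ^ k * (Real.sqrt (2 * π))⁻¹ * Stmt11Aux.gfun s t ^ k *
              Real.exp (-t ^ 2 / 2)
            = (K ^ k * (Real.sqrt (2 * π))⁻¹) *
              (Stmt11Aux.gfun s t ^ k * Real.exp (-t ^ 2 / 2)) := by ring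
          _ ≤ (K ^ k * (Real.sqrt (2 * π))⁻¹) *
              ((1 + 2 * |t|) ^ k * Real.exp (-t ^ 2 / 2)) := by
              refine mul_le_mul_of_nonneg_left ?_ hc
              exact mul_le_mul_of_nonneg_right hpow (Real.exp_pos _).le
      · refine Filter.Eventually.of_forall fun t => ?_
        have h := (((Stmt11Aux.gfun_tendsto t).pow k).const_mul
          (K ^ k * (Real.sqrt (2 * π))⁻¹)).mul_const (Real.exp (-t ^ 2 / 2))
        simp only [hF, hL]
        exact h.congr fun s => by ring
    -- assemble
    have hcomp : Tendsto (fun m : ℝ => m / K) atTop atTop :=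
      tendsto_id.atTop_div_const hK0
    have hfinal := hDC.comp hcomp
    refine hfinal.congr fun m => ?_
    have hm : K * (m / K) = m := by field_simp
    show (∫ t, F (m / K) t) = _
    rw [← hmain (m / K), hm]
end

section
/- Let d ≥ 1 and p ≥ 2, and let u₁, …, u_p and e₁, …, e_p be 2p mutually independent N(0, Id_d) random vectors in ℝ^d. Define the normalised Hebbian scores s_{μρ} = (1/d²) Σ_{ν=1}^p (u_μᵀ u_ν)(e_νᵀ e_ρ) for μ, ρ ∈ [p]. Then E[s_{μρ}] = 1 if μ = ρ and 0 otherwise, and for every μ ≠ ρ, Var[s_{μρ}] = 2/d + (p+2)/d². In particular, for μ ≠ ρ, Var[s_{μρ}] = (p/d²)(1 + o(1)) as d, p → ∞ with p/d → ∞. -/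
open MeasureTheory ProbabilityTheory Filter Real
open scoped NNReal ENNReal


/-- The standard Gaussian distribution `N(0, Id_d)` on `ℝ^d`, as a product of
standard real Gaussians. -/
noncomputable def stdGaussVec (d : ℕ) : Measure (Fin d → ℝ) :=
  Measure.pi fun _ => gaussianReal 0 1

/-- Joint law of the `2p` mutually independent `N(0, Id_d)` embedding vectors
`(u₁, …, u_p)` and `(e₁, …, e_p)`. -/
noncomputable def hebbEmbeddingLaw (d p : ℕ) :
    Measure ((Fin p → Fin d → ℝ) × (Fin p → Fin d → ℝ)) :=
  (Measure.pi fun _ : Fin p => stdGaussVec d).prod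
    (Measure.pi fun _ : Fin p => stdGaussVec d)

/-- The normalised Hebbian score
`s_{μρ} = (1/d²) Σ_ν (u_μᵀ u_ν)(e_νᵀ e_ρ)`, as a function of `w = (u, e)`. -/
noncomputable def hebbScore (d p : ℕ) (μ ρ : Fin p)
    (w : (Fin p → Fin d → ℝ) × (Fin p → Fin d → ℝ)) : ℝ :=
  (1 / (d : ℝ) ^ 2) *
    ∑ ν : Fin p, (∑ i, w.1 μ i * w.1 ν i) * (∑ i, w.2 ν i * w.2 ρ i)


instance (d : ℕ) : IsProbabilityMeasure (stdGaussVec d) := by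
  unfold stdGaussVec; infer_instance

instance (d p : ℕ) : IsProbabilityMeasure (hebbEmbeddingLaw d p) := by
  unfold hebbEmbeddingLaw; infer_instance

noncomputable def In (n : ℕ) : ℝ := ∫ x : ℝ, x ^ n * Real.exp (-(1/2) * x ^ 2)

lemma integrable_pow_exp (n : ℕ) :
    Integrable (fun x : ℝ => x ^ n * Real.exp (-(1/2) * x ^ 2)) := by
  have := integrable_rpow_mul_exp_neg_mul_sq (b := 1/2) (by norm_num)
    (s := (n : ℝ)) (by
      have : (0:ℝ) ≤ n := Nat.cast_nonneg n
      linarith)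
  simpa [Real.rpow_natCast] using this

lemma In_zero : In 0 = Real.sqrt (2 * π) := by
  have := integral_gaussian (1/2)
  simp only [In, pow_zero, one_mul]
  rw [this]
  congr 1
  ring

lemma sq_tendsto_top : Tendsto (fun x : ℝ => x ^ 2) atBot atTop := by
  have h1 : Tendsto (fun x : ℝ => x ^ 2) atTop atTop := tendsto_pow_atTop (by norm_num)
  have h2 := h1.comp tendsto_neg_atBot_atTop
  refine h2.congr fun x => by simp [Function.comp, neg_pow]

lemma exp_tendsto (l : Filter ℝ) (h : Tendsto (fun x : ℝ => x ^ 2) l atTop) :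
    Tendsto (fun x : ℝ => -Real.exp (-(1/2) * x ^ 2)) l (nhds 0) := by
  rw [show (0:ℝ) = -0 by ring]
  apply Tendsto.neg
  apply Real.tendsto_exp_atBot.comp
  exact h.const_mul_atTop_of_neg (by norm_num : (-(1/2):ℝ) < 0)

lemma hasDeriv_negexp (x : ℝ) :
    HasDerivAt (fun x : ℝ => -Real.exp (-(1/2) * x ^ 2)) (x * Real.exp (-(1/2) * x ^ 2)) x := by
  have h1 : HasDerivAt (fun x : ℝ => -(1/2) * x ^ 2) (-(1/2) * (2 * x)) x := by
    simpa using (hasDerivAt_pow 2 x).const_mul (-(1/2) : ℝ)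
  have : HasDerivAt (fun x : ℝ => -Real.exp (-(1/2) * x ^ 2))
      (-(Real.exp (-(1/2) * x ^ 2) * (-(1/2) * (2 * x)))) x := (h1.exp).neg
  convert this using 1
  ring

lemma In_one : In 1 = 0 := by
  have h := integral_of_hasDerivAt_of_tendsto (f := fun x : ℝ => -Real.exp (-(1/2) * x ^ 2))
    (f' := fun x : ℝ => x * Real.exp (-(1/2) * x ^ 2)) (fun x => hasDeriv_negexp x)
    (by simpa [pow_one] using integrable_pow_exp 1)
    (exp_tendsto _ sq_tendsto_top) (exp_tendsto _ (tendsto_pow_atTop (by norm_num)))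
  simpa [In, pow_one] using h

lemma In_rec (n : ℕ) : In (n + 2) = (n + 1) * In n := by
  have hu : ∀ x : ℝ, HasDerivAt (fun x : ℝ => x ^ (n+1)) (((n:ℝ)+1) * x ^ n) x := by
    intro x
    simpa using hasDerivAt_pow (n+1) x
  have key := integral_mul_deriv_eq_deriv_mul_of_integrable
    (u := fun x : ℝ => x ^ (n+1)) (u' := fun x : ℝ => ((n:ℝ)+1) * x ^ n)
    (v := fun x : ℝ => -Real.exp (-(1/2) * x ^ 2))
    (v' := fun x : ℝ => x * Real.exp (-(1/2) * x ^ 2))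
    (fun x _ => hu x) (fun x _ => hasDeriv_negexp x)
    (by
      have := integrable_pow_exp (n+2)
      refine (this.congr ?_)
      refine Filter.Eventually.of_forall fun x => ?_
      show x ^ (n+2) * Real.exp (-(1/2) * x ^ 2) = x ^ (n+1) * (x * Real.exp (-(1/2) * x ^ 2))
      ring)
    (by
      have := (integrable_pow_exp n).const_mul (-((n:ℝ)+1))
      refine (this.congr ?_)
      refine Filter.Eventually.of_forall fun x => ?_
      show -((n:ℝ)+1) * (x ^ n * Real.exp (-(1/2) * x ^ 2))
          = ((n:ℝ)+1) * x ^ n * -Real.exp (-(1/2) * x ^ 2)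
      ring)
    (by
      have := (integrable_pow_exp (n+1)).neg
      refine (this.congr ?_)
      refine Filter.Eventually.of_forall fun x => ?_
      show -(x ^ (n+1) * Real.exp (-(1/2) * x ^ 2)) = x ^ (n+1) * -Real.exp (-(1/2) * x ^ 2)
      ring)
  have lhs : ∫ x : ℝ, x ^ (n+1) * (x * Real.exp (-(1/2) * x ^ 2)) = In (n+2) := by
    rw [In]; congr 1; funext x; ring
  have rhs : ∫ x : ℝ, ((n:ℝ)+1) * x ^ n * -Real.exp (-(1/2) * x ^ 2)
      = -(((n:ℝ)+1) * In n) := by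
    rw [In, ← integral_const_mul]
    rw [← integral_neg]
    congr 1; funext x; ring
  rw [lhs, rhs] at key
  rw [key]
  push_cast
  ring

noncomputable def gmom (n : ℕ) : ℝ := ∫ x : ℝ, x ^ n ∂(gaussianReal 0 1)

lemma gauss_pdf_eq (x : ℝ) :
    gaussianPDFReal 0 1 x = (Real.sqrt (2 * π))⁻¹ * Real.exp (-(1/2) * x ^ 2) := by
  rw [gaussianPDFReal]
  norm_num
  left
  ring_nf

lemma integral_gauss_eq (f : ℝ → ℝ) :
    ∫ x, f x ∂(gaussianReal 0 1)
      = (Real.sqrt (2 * π))⁻¹ * ∫ x : ℝ, f x * Real.exp (-(1/2) * x ^ 2) := by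
  rw [gaussianReal_of_var_ne_zero 0 one_ne_zero]
  rw [gaussianPDF_def]
  have : (fun x => ENNReal.ofReal (gaussianPDFReal 0 1 x))
      = fun x => ((Real.toNNReal (gaussianPDFReal 0 1 x) : ℝ≥0) : ℝ≥0∞) := rfl
  rw [this, integral_withDensity_eq_integral_smul
    ((measurable_gaussianPDFReal 0 1).real_toNNReal) f]
  rw [← integral_const_mul]
  congr 1
  funext x
  rw [NNReal.smul_def, Real.coe_toNNReal _ (gaussianPDFReal_nonneg 0 1 x), gauss_pdf_eq,
    smul_eq_mul]
  ring

lemma sqrt_two_pi_pos : 0 < Real.sqrt (2 * π) := Real.sqrt_pos.2 (by positivity)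

lemma gmom_eq (n : ℕ) : gmom n = (Real.sqrt (2 * π))⁻¹ * In n := by
  rw [gmom, integral_gauss_eq]; rfl

lemma gmom_zero : gmom 0 = 1 := by
  rw [gmom_eq, In_zero, inv_mul_cancel₀ (ne_of_gt sqrt_two_pi_pos)]

lemma gmom_one : gmom 1 = 0 := by rw [gmom_eq, In_one, mul_zero]

lemma gmom_two : gmom 2 = 1 := by
  have h : In 2 = 1 * In 0 := by simpa using In_rec 0
  rw [gmom_eq, h, In_zero]
  rw [one_mul, inv_mul_cancel₀ (ne_of_gt sqrt_two_pi_pos)]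

lemma gmom_three : gmom 3 = 0 := by
  have h : In 3 = 2 * In 1 := by
    have := In_rec 1
    norm_num at this
    exact this
  rw [gmom_eq, h, In_one]; ring

lemma gmom_four : gmom 4 = 3 := by
  have h : In 4 = 3 * In 2 := by simpa [show (2:ℝ)+1 = 3 by norm_num] using In_rec 2
  have h2 : In 2 = 1 * In 0 := by simpa using In_rec 0
  rw [gmom_eq, h, h2, In_zero, one_mul]
  field_simp

lemma integrable_pow_gauss (n : ℕ) :
    Integrable (fun x : ℝ => x ^ n) (gaussianReal 0 1) := by
  rw [gaussianReal_of_var_ne_zero 0 one_ne_zero, gaussianPDF_def]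
  rw [integrable_withDensity_iff (measurable_gaussianPDFReal 0 1).ennreal_ofReal
    (Filter.Eventually.of_forall fun x => ENNReal.ofReal_lt_top)]
  have : Integrable (fun x : ℝ => (Real.sqrt (2 * π))⁻¹ * (x ^ n * Real.exp (-(1/2) * x ^ 2))) :=
    (integrable_pow_exp n).const_mul _
  refine this.congr (Filter.Eventually.of_forall fun x => ?_)
  show _ = x ^ n * (ENNReal.ofReal (gaussianPDFReal 0 1 x)).toReal
  rw [ENNReal.toReal_ofReal (gaussianPDFReal_nonneg 0 1 x), gauss_pdf_eq]
  ring

section PiProd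

variable {ι : Type*} [Fintype ι] {α : Type*} [MeasurableSpace α]

lemma integral_pi_prod (μ : Measure α) [SigmaFinite μ] (f : ι → α → ℝ) :
    ∫ x : ι → α, ∏ i, f i (x i) ∂(Measure.pi fun _ => μ) = ∏ i, ∫ x, f i x ∂μ := by
  have := MeasureTheory.integral_fintype_prod_eq_prod (𝕜 := ℝ) (f := f) (μ := fun _ => μ)
  exact this

lemma integrable_pi_prod (μ : Measure α) [SigmaFinite μ] {f : ι → α → ℝ}
    (hf : ∀ i, Integrable (f i) μ) :
    Integrable (fun x : ι → α => ∏ i, f i (x i)) (Measure.pi fun _ => μ) := by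
  have := MeasureTheory.Integrable.fintype_prod (𝕜 := ℝ) (f := f) (μ := fun _ => μ) hf
  exact this

end PiProd

section Mono

variable {d p : ℕ}

/-- Integral of a monomial over the iid Gaussian ensemble. -/
lemma integral_monom (k : Fin p × Fin d → ℕ) :
    ∫ u : Fin p → Fin d → ℝ, ∏ c : Fin p × Fin d, (u c.1 c.2) ^ k c
        ∂(Measure.pi fun _ : Fin p => stdGaussVec d)
      = ∏ c : Fin p × Fin d, gmom (k c) := by
  have h1 : ∀ u : Fin p → Fin d → ℝ,
      ∏ c : Fin p × Fin d, (u c.1 c.2) ^ k c = ∏ κ : Fin p, ∏ j : Fin d, (u κ j) ^ k (κ, j) :=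
    fun u => Fintype.prod_prod_type _
  simp_rw [h1]
  rw [integral_pi_prod (stdGaussVec d) (fun κ (y : Fin d → ℝ) => ∏ j, (y j) ^ k (κ, j))]
  rw [Fintype.prod_prod_type (fun c : Fin p × Fin d => gmom (k c))]
  congr 1
  funext κ
  rw [stdGaussVec, integral_pi_prod (gaussianReal 0 1) (fun j (x : ℝ) => x ^ k (κ, j))]
  rfl

lemma integrable_mono (k : Fin p × Fin d → ℕ) :
    Integrable (fun u : Fin p → Fin d → ℝ => ∏ c : Fin p × Fin d, (u c.1 c.2) ^ k c)
      (Measure.pi fun _ : Fin p => stdGaussVec d) := by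
  have h1 : ∀ u : Fin p → Fin d → ℝ,
      ∏ c : Fin p × Fin d, (u c.1 c.2) ^ k c = ∏ κ : Fin p, ∏ j : Fin d, (u κ j) ^ k (κ, j) :=
    fun u => Fintype.prod_prod_type _
  have h2 : Integrable (fun u : Fin p → Fin d → ℝ => ∏ κ : Fin p, ∏ j : Fin d, (u κ j) ^ k (κ, j))
      (Measure.pi fun _ : Fin p => stdGaussVec d) := by
    refine integrable_pi_prod (stdGaussVec d)
      (f := fun κ (y : Fin d → ℝ) => ∏ j, (y j) ^ k (κ, j)) (fun κ => ?_)
    rw [stdGaussVec]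
    exact integrable_pi_prod (gaussianReal 0 1) (fun j => integrable_pow_gauss (k (κ, j)))
  exact h2.congr (Filter.Eventually.of_forall fun u => (h1 u).symm)

end Mono

section ProdHelpers

variable {α : Type*} [Fintype α] [DecidableEq α]

lemma prod_gmom_single (f : α → ℕ) (a : α) (h : ∀ c, c ≠ a → f c = 0) :
    ∏ c, gmom (f c) = gmom (f a) :=
  Finset.prod_eq_single a (fun b _ hb => by rw [h b hb, gmom_zero])
    (fun h' => absurd (Finset.mem_univ a) h')

lemma prod_gmom_pair (f : α → ℕ) (a b : α) (hab : a ≠ b)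
    (h : ∀ c, c ≠ a → c ≠ b → f c = 0) :
    ∏ c, gmom (f c) = gmom (f a) * gmom (f b) := by
  calc ∏ c, gmom (f c) = ∏ c ∈ ({a, b} : Finset α), gmom (f c) := by
        refine (Finset.prod_subset (Finset.subset_univ _) fun x _ hx => ?_).symm
        simp only [Finset.mem_insert, Finset.mem_singleton, not_or] at hx
        rw [h x hx.1 hx.2, gmom_zero]
    _ = gmom (f a) * gmom (f b) := Finset.prod_pair hab

lemma prod_gmom_zero (f : α → ℕ) (a : α) (h : gmom (f a) = 0) :
    ∏ c, gmom (f c) = 0 :=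
  Finset.prod_eq_zero (Finset.mem_univ a) h

lemma prod_pow_ind (f : α → ℝ) (a : α) :
    ∏ c, f c ^ (if c = a then 1 else 0) = f a := by
  have : ∀ c, f c ^ (if c = a then 1 else 0) = if c = a then f c else 1 := by
    intro c; split <;> simp
  simp_rw [this]
  simp

end ProdHelpers

section DotLemmas

variable {d p : ℕ}

lemma mono2 (u : Fin p → Fin d → ℝ) (c1 c2 : Fin p × Fin d) :
    u c1.1 c1.2 * u c2.1 c2.2
      = ∏ c : Fin p × Fin d,
          (u c.1 c.2) ^ ((if c = c1 then 1 else 0) + (if c = c2 then 1 else 0)) := by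
  simp_rw [pow_add, Finset.prod_mul_distrib, prod_pow_ind]

lemma mono4 (u : Fin p → Fin d → ℝ) (c1 c2 c3 c4 : Fin p × Fin d) :
    u c1.1 c1.2 * u c2.1 c2.2 * (u c3.1 c3.2 * u c4.1 c4.2)
      = ∏ c : Fin p × Fin d,
          (u c.1 c.2) ^ ((if c = c1 then 1 else 0) + (if c = c2 then 1 else 0)
            + ((if c = c3 then 1 else 0) + (if c = c4 then 1 else 0))) := by
  simp_rw [pow_add, Finset.prod_mul_distrib, prod_pow_ind]

lemma integrable_dot_term (a b : Fin p) (i : Fin d) :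
    Integrable (fun u : Fin p → Fin d → ℝ => u a i * u b i)
      (Measure.pi fun _ : Fin p => stdGaussVec d) :=
  (integrable_mono _).congr
    (Filter.Eventually.of_forall fun u => (mono2 u (a, i) (b, i)).symm)

lemma integrable_dot (a b : Fin p) :
    Integrable (fun u : Fin p → Fin d → ℝ => ∑ i, u a i * u b i)
      (Measure.pi fun _ : Fin p => stdGaussVec d) :=
  integrable_finset_sum _ (fun i _ => integrable_dot_term a b i)

lemma integral_dot_term (a b : Fin p) (i : Fin d) :
    ∫ u : Fin p → Fin d → ℝ, u a i * u b i ∂(Measure.pi fun _ : Fin p => stdGaussVec d)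
      = if b = a then 1 else 0 := by
  have h : (fun u : Fin p → Fin d → ℝ => u a i * u b i)
      = fun u => ∏ c : Fin p × Fin d,
          (u c.1 c.2) ^ ((if c = (a, i) then 1 else 0) + (if c = (b, i) then 1 else 0)) := by
    funext u; exact mono2 u (a, i) (b, i)
  rw [h, integral_monom]
  by_cases hba : b = a
  · subst hba
    rw [prod_gmom_single _ (b, i) (fun c hc => by simp [if_neg hc])]
    simp [gmom_two]
  · rw [prod_gmom_zero _ (b, i) ?_, if_neg hba]
    have h1 : ((b, i) : Fin p × Fin d) ≠ (a, i) := by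
      simp [Prod.ext_iff, hba]
    rw [if_neg h1, if_pos rfl, gmom_one]

lemma integral_dot (a b : Fin p) :
    ∫ u : Fin p → Fin d → ℝ, ∑ i, u a i * u b i ∂(Measure.pi fun _ : Fin p => stdGaussVec d)
      = if b = a then (d : ℝ) else 0 := by
  rw [integral_finset_sum _ (fun i _ => integrable_dot_term a b i)]
  simp_rw [integral_dot_term]
  by_cases hba : b = a <;> simp [hba, Finset.card_univ]

end DotLemmas

section DotSq

variable {d p : ℕ}

lemma integrable_dot4_term (a ν ν' : Fin p) (i j : Fin d) :
    Integrable (fun u : Fin p → Fin d → ℝ => u a i * u ν i * (u a j * u ν' j))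
      (Measure.pi fun _ : Fin p => stdGaussVec d) :=
  (integrable_mono _).congr
    (Filter.Eventually.of_forall fun u => (mono4 u (a, i) (ν, i) (a, j) (ν', j)).symm)

lemma integral_dot4_term (a ν ν' : Fin p) (i j : Fin d) :
    ∫ u : Fin p → Fin d → ℝ, u a i * u ν i * (u a j * u ν' j)
        ∂(Measure.pi fun _ : Fin p => stdGaussVec d)
      = if ν = a ∧ ν' = a then (if i = j then 3 else 1)
        else if ν = ν' then (if i = j then 1 else 0) else 0 := by
  have h : (fun u : Fin p → Fin d → ℝ => u a i * u ν i * (u a j * u ν' j))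
      = fun u => ∏ c : Fin p × Fin d,
          (u c.1 c.2) ^ ((if c = (a, i) then 1 else 0) + (if c = (ν, i) then 1 else 0)
            + ((if c = (a, j) then 1 else 0) + (if c = (ν', j) then 1 else 0))) := by
    funext u; exact mono4 u (a, i) (ν, i) (a, j) (ν', j)
  rw [h, integral_monom]
  by_cases hν : ν = a <;> by_cases hν' : ν' = a
  · -- both equal a; after substs the surviving variable is ν'
    subst hν; subst hν'
    rw [if_pos ⟨rfl, rfl⟩]
    by_cases hij : i = j
    · subst hij
      rw [prod_gmom_single _ (ν', i) (fun c hc => by simp [if_neg hc])]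
      simp [gmom_four]
    · rw [prod_gmom_pair _ (ν', i) (ν', j) (by simp [Prod.ext_iff, hij])
        (fun c hc1 hc2 => by simp [if_neg hc1, if_neg hc2])]
      have e1 : ((ν', i) : Fin p × Fin d) ≠ (ν', j) := by simp [Prod.ext_iff, hij]
      have e2 : ((ν', j) : Fin p × Fin d) ≠ (ν', i) := by simp [Prod.ext_iff, Ne.symm hij]
      simp [e1, e2, hij, gmom_two]
  · -- ν = a, ν' ≠ a : zero
    rw [if_neg (by tauto), if_neg (by rw [hν]; exact fun h => hν' h.symm)]
    refine prod_gmom_zero _ (ν', j) ?_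
    have e1 : ((ν', j) : Fin p × Fin d) ≠ (a, i) := by simp [Prod.ext_iff]; tauto
    have e2 : ((ν', j) : Fin p × Fin d) ≠ (ν, i) := by rw [hν]; simp [Prod.ext_iff]; tauto
    have e3 : ((ν', j) : Fin p × Fin d) ≠ (a, j) := by simp [Prod.ext_iff]; tauto
    simp [e1, e2, e3, gmom_one]
  · -- ν ≠ a, ν' = a : zero
    rw [if_neg (by tauto), if_neg (by rw [hν']; exact hν)]
    refine prod_gmom_zero _ (ν, i) ?_
    have e1 : ((ν, i) : Fin p × Fin d) ≠ (a, i) := by simp [Prod.ext_iff]; tauto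
    have e3 : ((ν, i) : Fin p × Fin d) ≠ (a, j) := by simp [Prod.ext_iff]; tauto
    have e4 : ((ν, i) : Fin p × Fin d) ≠ (ν', j) := by rw [hν']; simp [Prod.ext_iff]; tauto
    simp [e1, e3, e4, gmom_one]
  · -- ν ≠ a, ν' ≠ a
    rw [if_neg (by tauto)]
    by_cases hνν' : ν = ν'
    · subst hνν'
      rw [if_pos rfl]
      by_cases hij : i = j
      · subst hij
        have e1 : ((a, i) : Fin p × Fin d) ≠ (ν, i) := by
          simp [Prod.ext_iff]; exact fun h => hν h.symm
        have e2 : ((ν, i) : Fin p × Fin d) ≠ (a, i) := by simp [Prod.ext_iff]; tauto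
        rw [prod_gmom_pair _ (a, i) (ν, i) e1
          (fun c hc1 hc2 => by simp [if_neg hc1, if_neg hc2])]
        simp [e1, e2, gmom_two]
      · rw [if_neg hij]
        refine prod_gmom_zero _ (ν, i) ?_
        have e1 : ((ν, i) : Fin p × Fin d) ≠ (a, i) := by simp [Prod.ext_iff]; tauto
        have e3 : ((ν, i) : Fin p × Fin d) ≠ (a, j) := by simp [Prod.ext_iff]; tauto
        have e4 : ((ν, i) : Fin p × Fin d) ≠ (ν, j) := by simp [Prod.ext_iff]; tauto
        simp [e1, e3, e4, gmom_one]
    · rw [if_neg hνν']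
      refine prod_gmom_zero _ (ν, i) ?_
      have e1 : ((ν, i) : Fin p × Fin d) ≠ (a, i) := by simp [Prod.ext_iff]; tauto
      have e3 : ((ν, i) : Fin p × Fin d) ≠ (a, j) := by simp [Prod.ext_iff]; tauto
      have e4 : ((ν, i) : Fin p × Fin d) ≠ (ν', j) := by simp [Prod.ext_iff]; tauto
      simp [e1, e3, e4, gmom_one]

lemma integrable_dot_mul_dot (a ν ν' : Fin p) :
    Integrable (fun u : Fin p → Fin d → ℝ =>
        (∑ i, u a i * u ν i) * (∑ j, u a j * u ν' j))
      (Measure.pi fun _ : Fin p => stdGaussVec d) := by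
  have h : (fun u : Fin p → Fin d → ℝ => (∑ i, u a i * u ν i) * (∑ j, u a j * u ν' j))
      = fun u => ∑ i : Fin d, ∑ j : Fin d, u a i * u ν i * (u a j * u ν' j) := by
    funext u; rw [Finset.sum_mul_sum]
  rw [h]
  exact integrable_finset_sum _ (fun i _ =>
    integrable_finset_sum _ (fun j _ => integrable_dot4_term a ν ν' i j))

lemma integral_dot_mul_dot (a ν ν' : Fin p) :
    ∫ u : Fin p → Fin d → ℝ, (∑ i, u a i * u ν i) * (∑ j, u a j * u ν' j)
        ∂(Measure.pi fun _ : Fin p => stdGaussVec d)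
      = if ν = a ∧ ν' = a then (d : ℝ) ^ 2 + 2 * d
        else if ν = ν' then (d : ℝ) else 0 := by
  have h : (fun u : Fin p → Fin d → ℝ => (∑ i, u a i * u ν i) * (∑ j, u a j * u ν' j))
      = fun u => ∑ i : Fin d, ∑ j : Fin d, u a i * u ν i * (u a j * u ν' j) := by
    funext u; rw [Finset.sum_mul_sum]
  rw [h, integral_finset_sum _ (fun i _ =>
    integrable_finset_sum _ (fun j _ => integrable_dot4_term a ν ν' i j))]
  simp_rw [integral_finset_sum _ (fun j _ => integrable_dot4_term a ν ν' _ j),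
    integral_dot4_term]
  by_cases h1 : ν = a ∧ ν' = a
  · simp_rw [if_pos h1]
    have hrow : ∀ i : Fin d, ∑ j : Fin d, (if i = j then (3:ℝ) else 1) = (d : ℝ) + 2 := by
      intro i
      have h2 : ∀ j : Fin d, (if i = j then (3:ℝ) else 1) = (if j = i then (2:ℝ) else 0) + 1 := by
        intro j
        by_cases hij : i = j
        · simp [hij]; norm_num
        · simp [hij, Ne.symm hij]
      simp_rw [h2]
      rw [Finset.sum_add_distrib, Finset.sum_ite_eq' Finset.univ i (fun _ => (2:ℝ))]
      simp [Finset.card_univ]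
      ring
    simp_rw [hrow]
    rw [Finset.sum_const, Finset.card_univ]
    simp [Fintype.card_fin]
    ring
  · rw [if_neg h1]
    simp_rw [if_neg h1]
    by_cases h2 : ν = ν'
    · simp_rw [if_pos h2]
      have hrow : ∀ i : Fin d, ∑ j : Fin d, (if i = j then (1:ℝ) else 0) = 1 := by
        intro i
        rw [Finset.sum_ite_eq Finset.univ i (fun _ => (1:ℝ))]
        simp
      simp_rw [hrow]
      rw [Finset.sum_const, Finset.card_univ]
      simp [Fintype.card_fin]
    · simp_rw [if_neg h2]
      simp

end DotSq

section Main

variable {d p : ℕ}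

lemma hebbScore_eq (μ ρ : Fin p) :
    hebbScore d p μ ρ = fun w => (1 / (d : ℝ) ^ 2) *
      ∑ ν : Fin p, (∑ i, w.1 μ i * w.1 ν i) * (∑ i, w.2 ρ i * w.2 ν i) := by
  funext w
  rw [hebbScore]
  congr 1
  refine Finset.sum_congr rfl fun ν _ => ?_
  congr 1
  exact Finset.sum_congr rfl fun i _ => mul_comm _ _

lemma integrable_hebbScore (μ ρ : Fin p) :
    Integrable (hebbScore d p μ ρ) (hebbEmbeddingLaw d p) := by
  rw [hebbScore_eq, hebbEmbeddingLaw]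
  exact (integrable_finset_sum _ (fun ν _ =>
    (integrable_dot μ ν).mul_prod (integrable_dot ρ ν))).const_mul _

lemma integral_hebbScore (hd : 1 ≤ d) (μ ρ : Fin p) :
    ∫ w, hebbScore d p μ ρ w ∂(hebbEmbeddingLaw d p) = if μ = ρ then 1 else 0 := by
  have hd0 : (d : ℝ) ≠ 0 := Nat.cast_ne_zero.mpr (by omega)
  rw [hebbScore_eq, hebbEmbeddingLaw]
  simp only
  rw [integral_const_mul, integral_finset_sum _ (fun ν _ =>
    (integrable_dot μ ν).mul_prod (integrable_dot ρ ν))]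
  have hint : ∀ ν : Fin p,
      (∫ w : (Fin p → Fin d → ℝ) × (Fin p → Fin d → ℝ),
          (∑ i, w.1 μ i * w.1 ν i) * (∑ i, w.2 ρ i * w.2 ν i)
          ∂((Measure.pi fun _ : Fin p => stdGaussVec d).prod
            (Measure.pi fun _ : Fin p => stdGaussVec d)))
        = (if ν = μ then (d:ℝ) else 0) * (if ν = ρ then (d:ℝ) else 0) := by
    intro ν
    rw [integral_prod_mul (fun u : Fin p → Fin d → ℝ => ∑ i, u μ i * u ν i)
      (fun e : Fin p → Fin d → ℝ => ∑ i, e ρ i * e ν i), integral_dot, integral_dot]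
  simp_rw [hint]
  have hterm : ∀ ν : Fin p,
      (if ν = μ then (d:ℝ) else 0) * (if ν = ρ then (d:ℝ) else 0)
        = if ν = μ then (if μ = ρ then (d:ℝ) * d else 0) else 0 := by
    intro ν
    by_cases h1 : ν = μ
    · by_cases h2 : μ = ρ <;> simp [h1, h2]
    · simp [h1]
  simp_rw [hterm]
  rw [Finset.sum_ite_eq' Finset.univ μ (fun _ => if μ = ρ then (d:ℝ) * d else 0)]
  by_cases h : μ = ρ <;> simp [h]
  field_simp

lemma variance_hebbScore (hd : 1 ≤ d) {μ ρ : Fin p} (hne : μ ≠ ρ) :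
    variance (hebbScore d p μ ρ) (hebbEmbeddingLaw d p)
      = 2 / d + ((p : ℝ) + 2) / (d : ℝ) ^ 2 := by
  have hd0 : (d : ℝ) ≠ 0 := Nat.cast_ne_zero.mpr (by omega)
  have hsq_fun : (fun w => hebbScore d p μ ρ w ^ 2)
      = fun w : (Fin p → Fin d → ℝ) × (Fin p → Fin d → ℝ) =>
        (1 / (d : ℝ) ^ 2) ^ 2 * ∑ ν : Fin p, ∑ ν' : Fin p,
          ((∑ i, w.1 μ i * w.1 ν i) * (∑ j, w.1 μ j * w.1 ν' j))
            * ((∑ i, w.2 ρ i * w.2 ν i) * (∑ j, w.2 ρ j * w.2 ν' j)) := by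
    funext w
    rw [hebbScore_eq]
    simp only
    rw [mul_pow]
    congr 1
    rw [sq, Finset.sum_mul_sum]
    refine Finset.sum_congr rfl fun ν _ => Finset.sum_congr rfl fun ν' _ => by ring
  have hint_sq : Integrable (fun w => hebbScore d p μ ρ w ^ 2) (hebbEmbeddingLaw d p) := by
    rw [hsq_fun, hebbEmbeddingLaw]
    exact (integrable_finset_sum _ (fun ν _ => integrable_finset_sum _ (fun ν' _ =>
      (integrable_dot_mul_dot μ ν ν').mul_prod (integrable_dot_mul_dot ρ ν ν')))).const_mul _
  have hmem : MemLp (hebbScore d p μ ρ) 2 (hebbEmbeddingLaw d p) :=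
    (memLp_two_iff_integrable_sq (integrable_hebbScore μ ρ).aestronglyMeasurable).2 hint_sq
  rw [ProbabilityTheory.variance_eq_sub hmem]
  have hmean : ∫ w, hebbScore d p μ ρ w ∂(hebbEmbeddingLaw d p) = 0 := by
    rw [integral_hebbScore hd, if_neg hne]
  have h2 : ∫ w, hebbScore d p μ ρ w ^ 2 ∂(hebbEmbeddingLaw d p)
      = 2 / d + ((p : ℝ) + 2) / (d : ℝ) ^ 2 := by
    rw [show (fun w => hebbScore d p μ ρ w ^ 2) = _ from hsq_fun]
    rw [hebbEmbeddingLaw, integral_const_mul,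
      integral_finset_sum _ (fun ν _ => integrable_finset_sum _ (fun ν' _ =>
        (integrable_dot_mul_dot μ ν ν').mul_prod (integrable_dot_mul_dot ρ ν ν')))]
    have hterm : ∀ ν ν' : Fin p,
        (∫ w : (Fin p → Fin d → ℝ) × (Fin p → Fin d → ℝ),
            ((∑ i, w.1 μ i * w.1 ν i) * (∑ j, w.1 μ j * w.1 ν' j))
              * ((∑ i, w.2 ρ i * w.2 ν i) * (∑ j, w.2 ρ j * w.2 ν' j))
            ∂((Measure.pi fun _ : Fin p => stdGaussVec d).prod
              (Measure.pi fun _ : Fin p => stdGaussVec d)))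
          = (if ν = μ ∧ ν' = μ then (d:ℝ)^2 + 2*d else if ν = ν' then (d:ℝ) else 0)
            * (if ν = ρ ∧ ν' = ρ then (d:ℝ)^2 + 2*d else if ν = ν' then (d:ℝ) else 0) := by
      intro ν ν'
      rw [integral_prod_mul
        (fun u : Fin p → Fin d → ℝ => (∑ i, u μ i * u ν i) * (∑ j, u μ j * u ν' j))
        (fun e : Fin p → Fin d → ℝ => (∑ i, e ρ i * e ν i) * (∑ j, e ρ j * e ν' j)),
        integral_dot_mul_dot, integral_dot_mul_dot]
    have hrow : ∀ ν : Fin p,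
        (∫ w : (Fin p → Fin d → ℝ) × (Fin p → Fin d → ℝ), ∑ ν' : Fin p,
            ((∑ i, w.1 μ i * w.1 ν i) * (∑ j, w.1 μ j * w.1 ν' j))
              * ((∑ i, w.2 ρ i * w.2 ν i) * (∑ j, w.2 ρ j * w.2 ν' j))
            ∂((Measure.pi fun _ : Fin p => stdGaussVec d).prod
              (Measure.pi fun _ : Fin p => stdGaussVec d)))
          = ∑ ν' : Fin p,
            (if ν = μ ∧ ν' = μ then (d:ℝ)^2 + 2*d else if ν = ν' then (d:ℝ) else 0)
              * (if ν = ρ ∧ ν' = ρ then (d:ℝ)^2 + 2*d else if ν = ν' then (d:ℝ) else 0) := by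
      intro ν
      rw [integral_finset_sum _ (fun ν' _ =>
        (integrable_dot_mul_dot μ ν ν').mul_prod (integrable_dot_mul_dot ρ ν ν'))]
      exact Finset.sum_congr rfl fun ν' _ => hterm ν ν'
    rw [Finset.sum_congr rfl (fun ν _ => hrow ν)]
    have hcomb : ∀ ν ν' : Fin p,
        (if ν = μ ∧ ν' = μ then (d:ℝ)^2 + 2*d else if ν = ν' then (d:ℝ) else 0)
          * (if ν = ρ ∧ ν' = ρ then (d:ℝ)^2 + 2*d else if ν = ν' then (d:ℝ) else 0)
        = if ν' = ν then
            (if ν = μ then ((d:ℝ)^2 + 2*(d:ℝ))*(d:ℝ) else if ν = ρ then (d:ℝ)*((d:ℝ)^2 + 2*(d:ℝ)) else (d:ℝ)*(d:ℝ))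
          else 0 := by
      intro ν ν'
      by_cases hv : ν' = ν
      · subst hv
        by_cases h1 : ν' = μ
        · have h2 : ¬ ν' = ρ := by rw [h1]; exact hne
          simp [h1, h2, hne]
        · by_cases h2 : ν' = ρ <;> simp [h1, h2, hne, Ne.symm hne]
      · have hA : ¬(ν = μ ∧ ν' = μ) := by rintro ⟨r1, r2⟩; exact hv (r2.trans r1.symm)
        have hB : ¬(ν = ρ ∧ ν' = ρ) := by rintro ⟨r1, r2⟩; exact hv (r2.trans r1.symm)
        have hC : ¬(ν = ν') := fun h => hv h.symm
        simp [hA, hB, hC, hv]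
    simp_rw [hcomb]
    have hinner : ∀ ν : Fin p, (∑ ν' : Fin p, if ν' = ν then
        (if ν = μ then ((d:ℝ)^2 + 2*(d:ℝ))*(d:ℝ) else if ν = ρ then (d:ℝ)*((d:ℝ)^2 + 2*(d:ℝ)) else (d:ℝ)*(d:ℝ))
        else 0)
        = (if ν = μ then ((d:ℝ)^2 + 2*(d:ℝ))*(d:ℝ) else if ν = ρ then (d:ℝ)*((d:ℝ)^2 + 2*(d:ℝ)) else (d:ℝ)*(d:ℝ)) := by
      intro ν
      rw [Finset.sum_ite_eq' Finset.univ ν]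
      simp
    rw [Finset.sum_congr rfl (fun ν _ => hinner ν)]
    have hK : ∀ ν : Fin p,
        (if ν = μ then ((d:ℝ)^2 + 2*(d:ℝ))*(d:ℝ) else if ν = ρ then (d:ℝ)*((d:ℝ)^2 + 2*(d:ℝ)) else (d:ℝ)*(d:ℝ))
        = (d:ℝ)*(d:ℝ) + (if ν = μ then ((d:ℝ)^2 + 2*(d:ℝ))*(d:ℝ) - (d:ℝ)*(d:ℝ) else 0)
            + (if ν = ρ then (d:ℝ)*((d:ℝ)^2 + 2*(d:ℝ)) - (d:ℝ)*(d:ℝ) else 0) := by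
      intro ν
      by_cases h1 : ν = μ
      · have h2 : ¬ ν = ρ := by rw [h1]; exact hne
        simp [h1, h2, hne]
      · by_cases h2 : ν = ρ
        · simp [h1, h2, hne, Ne.symm hne]
        · simp [h1, h2]
    simp_rw [hK]
    rw [Finset.sum_add_distrib, Finset.sum_add_distrib, Finset.sum_const, Finset.card_univ,
      Finset.sum_ite_eq' Finset.univ μ, Finset.sum_ite_eq' Finset.univ ρ]
    simp only [Finset.mem_univ, if_true, Fintype.card_fin, nsmul_eq_mul]
    field_simp
    ring
  simp only [Pi.pow_apply]
  rw [h2, hmean]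
  norm_num

end Main

theorem stmt13 :
    (∀ d p : ℕ, 1 ≤ d → ∀ μ ρ : Fin p,
      (∫ w, hebbScore d p μ ρ w ∂(hebbEmbeddingLaw d p)) =
        if μ = ρ then 1 else 0) ∧
    (∀ d p : ℕ, 1 ≤ d → ∀ μ ρ : Fin p, μ ≠ ρ →
      variance (hebbScore d p μ ρ) (hebbEmbeddingLaw d p) =
        2 / d + ((p : ℝ) + 2) / (d : ℝ) ^ 2) ∧
    (∀ dn pn : ℕ → ℕ,
      Tendsto dn atTop atTop →
      Tendsto (fun n => (pn n : ℝ) / (dn n : ℝ)) atTop atTop →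
      ∀ μρ : ∀ n, Fin (pn n) × Fin (pn n),
        (∀ n, (μρ n).1 ≠ (μρ n).2) →
        Tendsto
          (fun n =>
            variance (hebbScore (dn n) (pn n) (μρ n).1 (μρ n).2)
                (hebbEmbeddingLaw (dn n) (pn n)) /
              ((pn n : ℝ) / (dn n : ℝ) ^ 2))
          atTop (nhds 1)) := by
  refine ⟨fun d p hd μ ρ => integral_hebbScore hd μ ρ,
    fun d p hd μ ρ hne => variance_hebbScore hd hne, ?_⟩
  intro dn pn h1 h2 μρ hμρ
  have hpn : Tendsto (fun n => (pn n : ℝ)) atTop atTop := by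
    refine tendsto_atTop_mono' atTop ?_ h2
    filter_upwards [h1.eventually_ge_atTop 1] with n hd
    have hd1 : (1:ℝ) ≤ (dn n : ℝ) := by exact_mod_cast hd
    have hp0 : (0:ℝ) ≤ (pn n : ℝ) := Nat.cast_nonneg _
    calc (pn n : ℝ) / (dn n : ℝ) ≤ (pn n : ℝ) / 1 := by
          apply div_le_div_of_nonneg_left hp0 <;> linarith
      _ = (pn n : ℝ) := by ring
  have hlim : Tendsto (fun n => 2 * ((pn n : ℝ) / (dn n : ℝ))⁻¹ + (1 + 2 * ((pn n : ℝ))⁻¹))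
      atTop (nhds 1) := by
    have l1 : Tendsto (fun n => ((pn n : ℝ) / (dn n : ℝ))⁻¹) atTop (nhds 0) :=
      h2.inv_tendsto_atTop
    have l2 : Tendsto (fun n => ((pn n : ℝ))⁻¹) atTop (nhds 0) :=
      hpn.inv_tendsto_atTop
    have := (l1.const_mul 2).add ((tendsto_const_nhds (x := (1:ℝ))).add (l2.const_mul 2))
    simpa using this
  refine hlim.congr' ?_
  filter_upwards [h1.eventually_ge_atTop 1, h2.eventually_ge_atTop 1] with n hd hpd
  have hd1 : (1:ℝ) ≤ (dn n : ℝ) := by exact_mod_cast hd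
  have hd0 : (0:ℝ) < (dn n : ℝ) := by linarith
  have hp1 : (dn n : ℝ) ≤ (pn n : ℝ) := by
    rwa [one_le_div hd0] at hpd
  have hp0 : (0:ℝ) < (pn n : ℝ) := by linarith
  rw [variance_hebbScore hd (hμρ n)]
  field_simp
end
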